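/- arXiv:2512.23828 — 4 statements merged into one kernel-verified Lean document; each statement's English description precedes it below -/
import Mathlib

section
/- Let H be a target graph, possibly with loops. Suppose there is an ordering H^1, …, H^k of the automorphic similarity classes of H such that the associated automorphic similarity matrix M has the increasing columns property. Then H is Hoffman-London; that is, for every n ≥ 1 and every tree T on n vertices, hom(P_n, H) ≤ hom(T, H). -/
/-!
Let `A` be the adjacency matrix of `H` and `W n = Aⁿ 1` its walk counts, so that
`hom(P_{n+1}, H) = ∑ W n`. The neighbour counts `m` together with the increasing columns property
say, via Abel summation, that `A` maps functions that are monotone in the class order to such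
functions. Hence `W n` and the root-count vectors `h_t` of all rooted trees `t` are class-monotone,
so any two of them are similarly ordered.

For a rooted tree `t` with `n` non-root vertices and every class-monotone weight `x` we show
`W n ⬝ᵥ x ≤ h_t ⬝ᵥ x` by induction on `t`: the subtree below the first child of the root is
replaced by a pendant path (induction hypothesis, moved across the edge to the root by symmetry
of `A`), then the rest of the tree is replaced by a pendant path, and finally the two pendant
paths of lengths `a` and `b` at the root are merged into one of length `a + b`. This last step is
the rearrangement inequality `(Aᵃ y) ⬝ᵥ x ≤ (W a * y) ⬝ᵥ x` for the symmetric matrix `Aᵃ` and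
similarly ordered `x, y`. Taking `x = 1` gives `hom(P_n, H) ≤ hom(T, H)`.
-/

/-- The number of `H`-colorings of a simple graph `G`, where the target graph `H`
is given by a (possibly reflexive) adjacency relation `HAdj` on a finite vertex set. -/
noncomputable def homCount {VG VH : Type} [Fintype VG] [Fintype VH]
    (G : SimpleGraph VG) (HAdj : VH → VH → Prop) : ℕ :=
  Nat.card {f : VG → VH // ∀ u v : VG, G.Adj u v → HAdj (f u) (f v)}

open Finset Matrix

theorem sum_mul_le_sum_mul_of_tail_le {ι : Type*} [Fintype ι] [LinearOrder ι] {a b g : ι → ℕ}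
    (hg : Monotone g)
    (htail : ∀ c, ∑ j, (if c ≤ j then a j else 0) ≤ ∑ j, (if c ≤ j then b j else 0)) :
    ∑ j, a j * g j ≤ ∑ j, b j * g j := by
  set N := ∑ j, g j
  -- layer-cake decomposition `g j = #{t < N | t < g j}`
  have layer (f : ι → ℕ) : ∑ j, f j * g j = ∑ t ∈ range N, ∑ j, if t < g j then f j else 0 := by
    rw [Finset.sum_comm]
    refine sum_congr rfl fun j _ => ?_
    have hfilter : (range N).filter (· < g j) = range (g j) := by
      ext t
      have : g j ≤ N := single_le_sum (fun _ _ => Nat.zero_le _) (mem_univ j)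
      simp only [mem_filter, mem_range]
      omega
    rw [← sum_filter, hfilter, sum_const, card_range, smul_eq_mul, mul_comm]
  have level (t : ℕ) :
      ∑ j, (if t < g j then a j else 0) ≤ ∑ j, (if t < g j then b j else 0) := by
    by_cases h : ∃ j, t < g j
    · obtain ⟨c, hc, hmin⟩ :=
        (univ.filter (t < g ·)).exists_min_image id (by simpa [Finset.Nonempty] using h)
      simp only [mem_filter, mem_univ, true_and, id] at hc hmin
      have hiff (j : ι) : t < g j ↔ c ≤ j := ⟨hmin j, fun hj => hc.trans_le (hg hj)⟩
      simpa only [hiff] using htail c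
    · simp only [not_exists, not_lt] at h
      simp [not_lt.mpr (h _)]
  rw [layer a, layer b]
  exact sum_le_sum fun t _ => level t

def IncreasingColumns {k : ℕ} (m : Fin k → Fin k → ℕ) : Prop :=
  ∀ (c i : Fin k) (hi : i.val + 1 < k),
    ∑ j : Fin k, (if c ≤ j then m i j else 0) ≤
    ∑ j : Fin k, (if c ≤ j then m ⟨i.val + 1, hi⟩ j else 0)

namespace IncreasingColumns

variable {k : ℕ} {m : Fin k → Fin k → ℕ}

theorem monotone_tail (h : IncreasingColumns m) (c : Fin k) :
    Monotone fun i => ∑ j, if c ≤ j then m i j else 0 := by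
  cases k with
  | zero => exact c.elim0
  | succ k => exact Fin.monotone_iff_le_succ.mpr fun i => h c i.castSucc (by simp)

theorem monotone_sum_mul (h : IncreasingColumns m) {g : Fin k → ℕ} (hg : Monotone g) :
    Monotone fun i => ∑ j, m i j * g j :=
  fun _ _ hii' => sum_mul_le_sum_mul_of_tail_le hg fun c => h.monotone_tail c hii'

end IncreasingColumns

theorem Matrix.IsSymm.mulVec_dotProduct_comm {ι α : Type*} [Fintype ι] [NonUnitalCommSemiring α]
    {B : Matrix ι ι α} (hB : B.IsSymm) (u v : ι → α) : (B *ᵥ u) ⬝ᵥ v = u ⬝ᵥ (B *ᵥ v) := by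
  rw [dotProduct_comm, dotProduct_mulVec, ← mulVec_transpose, hB.eq, dotProduct_comm]

theorem mul_dotProduct {ι α : Type*} [Fintype ι] [NonUnitalSemiring α] (u v w : ι → α) :
    (u * v) ⬝ᵥ w = u ⬝ᵥ (v * w) := by
  simp only [dotProduct, Pi.mul_apply, mul_assoc]

theorem Matrix.IsSymm.mulVec_dotProduct_le_of_monovary {ι : Type*} [Fintype ι]
    {B : Matrix ι ι ℕ} (hB : B.IsSymm) {x y : ι → ℕ} (hxy : Monovary x y) :
    (B *ᵥ y) ⬝ᵥ x ≤ ((B *ᵥ 1) * y) ⬝ᵥ x := by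
  -- Summing `hpair` against `B v u = B u v` gives twice the claim.
  have hpair (u v : ι) : y u * x v + y v * x u ≤ y v * x v + y u * x u := by
    rcases lt_trichotomy (y u) (y v) with h | h | h
    · linarith [mul_add_mul_le_mul_add_mul h.le (hxy h)]
    · rw [h, add_comm]
    · linarith [mul_add_mul_le_mul_add_mul h.le (hxy h)]
  have hswap (f : ι → ι → ℕ) : ∑ v, ∑ u, B v u * f u v = ∑ v, ∑ u, B v u * f v u := by
    rw [Finset.sum_comm]
    simp only [hB.apply]
  have hsum : ∑ v, ∑ u, B v u * (y u * x v) + ∑ v, ∑ u, B v u * (y v * x u) ≤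
      ∑ v, ∑ u, B v u * (y v * x v) + ∑ v, ∑ u, B v u * (y u * x u) := by
    simp only [← sum_add_distrib, ← mul_add]
    exact sum_le_sum fun v _ => sum_le_sum fun u _ => Nat.mul_le_mul_left _ (hpair u v)
  rw [hswap fun u v => y v * x u, hswap fun u _ => y u * x u] at hsum
  have hL : (B *ᵥ y) ⬝ᵥ x = ∑ v, ∑ u, B v u * (y u * x v) := by
    simp [dotProduct, mulVec, sum_mul, mul_assoc]
  have hR : ((B *ᵥ 1) * y) ⬝ᵥ x = ∑ v, ∑ u, B v u * (y v * x v) := by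
    simp [dotProduct, mulVec, sum_mul, mul_assoc]
  omega

section WalkCount

variable {VH : Type} (HAdj : VH → VH → Prop)

open Classical in
noncomputable def relMatrix : Matrix VH VH ℕ := Matrix.of fun v w => if HAdj v w then 1 else 0

variable {HAdj} in
theorem relMatrix_isSymm (hsymm : Symmetric HAdj) : (relMatrix HAdj).IsSymm := by
  classical
  exact IsSymm.ext fun v w => by
    simp only [relMatrix, of_apply]
    exact if_congr ⟨fun h => hsymm h, fun h => hsymm h⟩ rfl rfl

variable [Fintype VH]

open Classical in
noncomputable def walkCount (n : ℕ) : VH → ℕ := (relMatrix HAdj ^ n) *ᵥ 1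

variable {HAdj}

open Classical in
theorem relMatrix_mulVec_apply (h : VH → ℕ) (v : VH) :
    (relMatrix HAdj *ᵥ h) v = ∑ w, if HAdj v w then h w else 0 := by
  simp only [mulVec, dotProduct, relMatrix, of_apply, ite_mul, one_mul, zero_mul]

@[simp]
theorem walkCount_zero : walkCount HAdj 0 = 1 := by
  simp [walkCount]

theorem walkCount_succ (n : ℕ) : walkCount HAdj (n + 1) = relMatrix HAdj *ᵥ walkCount HAdj n := by
  simp [walkCount, pow_succ', mulVec_mulVec]

theorem walkCount_add_dotProduct_le (hsymm : Symmetric HAdj) (a b : ℕ) {x : VH → ℕ}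
    (hx : Monovary x (walkCount HAdj b)) :
    walkCount HAdj (a + b) ⬝ᵥ x ≤ (walkCount HAdj a * walkCount HAdj b) ⬝ᵥ x := by
  classical
  have h : walkCount HAdj (a + b) = (relMatrix HAdj ^ a) *ᵥ walkCount HAdj b := by
    simp [walkCount, pow_add, mulVec_mulVec]
  rw [h]
  exact ((relMatrix_isSymm hsymm).pow a).mulVec_dotProduct_le_of_monovary hx

end WalkCount

section ClassMonotone

variable {VH : Type} {α : Type*} (cls : VH → α)

def ClassMonotone [Preorder α] (f : VH → ℕ) : Prop :=
  ∃ g : α → ℕ, Monotone g ∧ f = g ∘ cls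

variable {cls}

theorem classMonotone_one [Preorder α] : ClassMonotone cls 1 :=
  ⟨1, monotone_const, rfl⟩

theorem ClassMonotone.mul [Preorder α] {f f' : VH → ℕ} (hf : ClassMonotone cls f)
    (hf' : ClassMonotone cls f') : ClassMonotone cls (f * f') := by
  obtain ⟨g, hg, rfl⟩ := hf
  obtain ⟨g', hg', rfl⟩ := hf'
  exact ⟨g * g', hg.mul' hg', rfl⟩

theorem ClassMonotone.monovary [LinearOrder α] {f f' : VH → ℕ} (hf : ClassMonotone cls f)
    (hf' : ClassMonotone cls f') : Monovary f f' := by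
  obtain ⟨g, hg, rfl⟩ := hf
  obtain ⟨g', hg', rfl⟩ := hf'
  exact (hg.monovary hg').comp_right cls

end ClassMonotone

section NeighborMatrix

variable {VH : Type} [Fintype VH] {HAdj : VH → VH → Prop} {k : ℕ} {cls : VH → Fin k}
  {m : Fin k → Fin k → ℕ}

def IsNeighborMatrix (HAdj : VH → VH → Prop) (cls : VH → Fin k) (m : Fin k → Fin k → ℕ) : Prop :=
  ∀ (i j : Fin k) (v : VH), cls v = i → Nat.card {w : VH // HAdj v w ∧ cls w = j} = m i j

theorem IsNeighborMatrix.relMatrix_mulVec_comp (hm : IsNeighborMatrix HAdj cls m)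
    (g : Fin k → ℕ) (v : VH) : (relMatrix HAdj *ᵥ (g ∘ cls)) v = ∑ j, m (cls v) j * g j := by
  classical
  rw [relMatrix_mulVec_apply, ← sum_fiberwise univ cls]
  refine sum_congr rfl fun j _ => ?_
  rw [← hm _ j v rfl, Nat.card_eq_fintype_card, Fintype.card_subtype, card_filter, sum_mul,
    sum_filter]
  refine sum_congr rfl fun w _ => ?_
  by_cases hw : cls w = j <;> simp [hw]

theorem ClassMonotone.relMatrix_mulVec (hm : IsNeighborMatrix HAdj cls m)
    (hinc : IncreasingColumns m) {f : VH → ℕ} (hf : ClassMonotone cls f) :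
    ClassMonotone cls (relMatrix HAdj *ᵥ f) := by
  obtain ⟨g, hg, rfl⟩ := hf
  exact ⟨fun i => ∑ j, m i j * g j, hinc.monotone_sum_mul hg, funext (hm.relMatrix_mulVec_comp g)⟩

theorem walkCount_classMonotone (hm : IsNeighborMatrix HAdj cls m) (hinc : IncreasingColumns m)
    (n : ℕ) : ClassMonotone cls (walkCount HAdj n) := by
  induction n with
  | zero => simpa using classMonotone_one
  | succ n ih => simpa only [walkCount_succ] using ih.relMatrix_mulVec hm hinc

end NeighborMatrix

/-- Labelled rooted plane forests in first-child/next-sibling form: `node l c s` is a tree whose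
root is labelled `l` and has the forest `c` below it, followed by the forest `s`. -/
inductive Forest : Type
  | nil : Forest
  | node (label : ℕ) (children siblings : Forest) : Forest

namespace Forest

def labels : Forest → List ℕ
  | nil => []
  | node l c s => l :: (c.labels ++ s.labels)

def attach (a b : ℕ) : Forest → Forest
  | nil => nil
  | node l c s => node l (if l = a then node b nil (c.attach a b) else c.attach a b) (s.attach a b)

def ofParent (p : ℕ → ℕ) : ℕ → Forest
  | 0 => node 0 nil nil
  | n + 1 => (ofParent p n).attach (p (n + 1)) (n + 1)

theorem count_labels_attach (a b j : ℕ) :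
    ∀ t : Forest,
      (t.attach a b).labels.count j = t.labels.count j + if j = b then t.labels.count a else 0
  | nil => by simp [attach, labels]
  | node l c s => by
    have hc := count_labels_attach a b j c
    have hs := count_labels_attach a b j s
    by_cases hl : l = a <;> by_cases hj : j = b <;>
      simp_all [attach, labels, List.count_cons] <;> omega

theorem length_labels_attach (a b : ℕ) :
    ∀ t : Forest, (t.attach a b).labels.length = t.labels.length + t.labels.count a
  | nil => by simp [attach, labels]
  | node l c s => by
    have hc := length_labels_attach a b c
    have hs := length_labels_attach a b s
    by_cases hl : l = a <;> simp_all [attach, labels] <;> omega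

variable {p : ℕ → ℕ}

theorem count_labels_ofParent {n : ℕ} (hp : ∀ i, 1 ≤ i → i ≤ n → p i < i) (j : ℕ) :
    (ofParent p n).labels.count j = if j ≤ n then 1 else 0 := by
  induction n generalizing j with
  | zero =>
    simp only [ofParent, labels, List.nil_append, List.count_singleton']
    split_ifs <;> omega
  | succ n ih =>
    have ih' := ih fun i h1 h2 => hp i h1 (by omega)
    have hpn := hp (n + 1) (by omega) le_rfl
    rw [ofParent, count_labels_attach, ih', ih']
    split_ifs <;> omega

theorem length_labels_ofParent {n : ℕ} (hp : ∀ i, 1 ≤ i → i ≤ n → p i < i) :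
    (ofParent p n).labels.length = n + 1 := by
  induction n with
  | zero => rfl
  | succ n ih =>
    have hp' : ∀ i, 1 ≤ i → i ≤ n → p i < i := fun i h1 h2 => hp i h1 (by omega)
    have hpn := hp (n + 1) (by omega) le_rfl
    rw [ofParent, length_labels_attach, ih hp', count_labels_ofParent hp', if_pos (by omega)]

theorem exists_ofParent_eq_node (p : ℕ → ℕ) (n : ℕ) : ∃ c, ofParent p n = node 0 c nil := by
  induction n with
  | zero => exact ⟨nil, rfl⟩
  | succ n ih =>
    obtain ⟨c, hc⟩ := ih
    exact ⟨_, by rw [ofParent, hc, attach, attach]⟩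

end Forest

section Counting

variable {VH : Type} [Fintype VH] (HAdj : VH → VH → Prop)

/-- `rootCount HAdj F t v` counts the homomorphisms of `t` sending every root of `t` to a
neighbour of `v`, each weighted by `F l` at the image of every vertex labelled `l`. So
`rootCount HAdj 1 c v` counts the homomorphisms of the tree `node l c nil` sending its root to `v`.
-/
noncomputable def rootCount (F : ℕ → VH → ℕ) : Forest → VH → ℕ
  | .nil => 1
  | .node l c s => (relMatrix HAdj *ᵥ (F l * rootCount F c)) * rootCount F s

noncomputable def forestCount (F : ℕ → VH → ℕ) : Forest → ℕ
  | .nil => 1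
  | .node l c s => (F l ⬝ᵥ rootCount HAdj F c) * forestCount F s

/-- Summing out a leaf of weight `F b` hung below a vertex labelled `a` multiplies the weight of
that vertex by `relMatrix HAdj *ᵥ F b`. -/
noncomputable def hangWeight (F : ℕ → VH → ℕ) (a b : ℕ) : ℕ → VH → ℕ :=
  Function.update F a (F a * (relMatrix HAdj *ᵥ F b))

variable {HAdj}

theorem weight_mul_rootCount_attach {F : ℕ → VH → ℕ} {a b : ℕ} (l : ℕ) {c : Forest}
    (hc : rootCount HAdj F (c.attach a b) = rootCount HAdj (hangWeight HAdj F a b) c) :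
    F l * rootCount HAdj F (if l = a then .node b .nil (c.attach a b) else c.attach a b) =
      hangWeight HAdj F a b l * rootCount HAdj (hangWeight HAdj F a b) c := by
  by_cases hl : l = a
  · subst hl
    rw [if_pos rfl, rootCount, rootCount, hc]
    simp only [hangWeight, Function.update_self, mul_one]
    ring
  · simp only [if_neg hl, hangWeight, Function.update_of_ne hl, hc]

theorem rootCount_attach (F : ℕ → VH → ℕ) (a b : ℕ) :
    ∀ t : Forest, rootCount HAdj F (t.attach a b) = rootCount HAdj (hangWeight HAdj F a b) t
  | .nil => rfl
  | .node l c s => by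
    rw [Forest.attach, rootCount, rootCount,
      weight_mul_rootCount_attach l (rootCount_attach F a b c), rootCount_attach F a b s]

theorem forestCount_attach (F : ℕ → VH → ℕ) (a b : ℕ) :
    ∀ t : Forest, forestCount HAdj F (t.attach a b) = forestCount HAdj (hangWeight HAdj F a b) t
  | .nil => rfl
  | .node l c s => by
    have h := weight_mul_rootCount_attach (HAdj := HAdj) (F := F) l (rootCount_attach F a b c)
    rw [Forest.attach, forestCount, forestCount, forestCount_attach F a b s]
    congr 1
    simpa only [dotProduct, Pi.mul_apply] using congrArg (fun f => ∑ v, f v) h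

end Counting

section PathMinimizes

variable {VH : Type} [Fintype VH] {HAdj : VH → VH → Prop} {k : ℕ} {cls : VH → Fin k}
  {m : Fin k → Fin k → ℕ}

theorem rootCount_one_classMonotone (hm : IsNeighborMatrix HAdj cls m)
    (hinc : IncreasingColumns m) : ∀ t : Forest, ClassMonotone cls (rootCount HAdj 1 t)
  | .nil => classMonotone_one
  | .node l c s => by
    rw [rootCount, Pi.one_apply, one_mul]
    exact ((rootCount_one_classMonotone hm hinc c).relMatrix_mulVec hm hinc).mul
      (rootCount_one_classMonotone hm hinc s)

theorem walkCount_dotProduct_le_rootCount (hsymm : Symmetric HAdj)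
    (hm : IsNeighborMatrix HAdj cls m) (hinc : IncreasingColumns m) :
    ∀ (t : Forest) {x : VH → ℕ}, ClassMonotone cls x →
      walkCount HAdj t.labels.length ⬝ᵥ x ≤ rootCount HAdj 1 t ⬝ᵥ x
  | .nil, x, _ => by simp [Forest.labels, rootCount]
  | .node l c s, x, hx => by
    have hA := relMatrix_isSymm hsymm
    have hs := rootCount_one_classMonotone hm hinc s
    have hW := walkCount_classMonotone hm hinc (c.labels.length + 1)
    calc walkCount HAdj (Forest.node l c s).labels.length ⬝ᵥ x
        = walkCount HAdj (s.labels.length + (c.labels.length + 1)) ⬝ᵥ x := by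
          simp only [Forest.labels, List.length_cons, List.length_append]; ring_nf
      _ ≤ (walkCount HAdj s.labels.length * walkCount HAdj (c.labels.length + 1)) ⬝ᵥ x :=
          walkCount_add_dotProduct_le hsymm _ _ (hx.monovary hW)
      _ ≤ rootCount HAdj 1 s ⬝ᵥ (walkCount HAdj (c.labels.length + 1) * x) := by
          rw [mul_dotProduct]
          exact walkCount_dotProduct_le_rootCount hsymm hm hinc s (hW.mul hx)
      _ = walkCount HAdj c.labels.length ⬝ᵥ (relMatrix HAdj *ᵥ (rootCount HAdj 1 s * x)) := by
          rw [← mul_dotProduct, mul_comm, mul_dotProduct, walkCount_succ,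
            hA.mulVec_dotProduct_comm]
      _ ≤ rootCount HAdj 1 c ⬝ᵥ (relMatrix HAdj *ᵥ (rootCount HAdj 1 s * x)) :=
          walkCount_dotProduct_le_rootCount hsymm hm hinc c ((hs.mul hx).relMatrix_mulVec hm hinc)
      _ = rootCount HAdj 1 (.node l c s) ⬝ᵥ x := by
          rw [← hA.mulVec_dotProduct_comm, ← mul_dotProduct, rootCount, Pi.one_apply, one_mul]

end PathMinimizes

def parentGraph (p : ℕ → ℕ) (n : ℕ) : SimpleGraph (Fin (n + 1)) :=
  SimpleGraph.fromRel fun i j => i < j ∧ i.val = p j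

theorem forall_parentGraph_adj_iff {VH : Type} {HAdj : VH → VH → Prop} (hsymm : Symmetric HAdj)
    {p : ℕ → ℕ} {n : ℕ} (f : Fin (n + 1) → VH) :
    (∀ u v, (parentGraph p n).Adj u v → HAdj (f u) (f v)) ↔
      ∀ j i : Fin (n + 1), i < j → i.val = p j → HAdj (f i) (f j) := by
  simp only [parentGraph, SimpleGraph.fromRel_adj]
  constructor
  · exact fun h j i hij hp => h i j ⟨hij.ne, Or.inl ⟨hij, hp⟩⟩
  · rintro h u v ⟨-, ⟨huv, hp⟩ | ⟨hvu, hp⟩⟩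
    · exact h v u huv hp
    · exact hsymm (h u v hvu hp)

section WeightedCount

variable {VH : Type} [Fintype VH] (HAdj : VH → VH → Prop)

open Classical in
noncomputable def weightedHomCount {n : ℕ} (G : SimpleGraph (Fin n)) (F : ℕ → VH → ℕ) : ℕ :=
  ∑ f : Fin n → VH, if ∀ u v, G.Adj u v → HAdj (f u) (f v) then ∏ i : Fin n, F i (f i) else 0

variable {HAdj}

theorem homCount_eq_weightedHomCount_one {n : ℕ} (G : SimpleGraph (Fin n)) :
    homCount G HAdj = weightedHomCount HAdj G 1 := by
  classical
  rw [homCount, weightedHomCount, Nat.card_eq_fintype_card, Fintype.card_subtype, card_filter]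
  simp only [Pi.one_apply, prod_const_one]

theorem weightedHomCount_congr {n : ℕ} (G : SimpleGraph (Fin n)) {F F' : ℕ → VH → ℕ}
    (h : ∀ i : Fin n, F i = F' i) : weightedHomCount HAdj G F = weightedHomCount HAdj G F' := by
  simp only [weightedHomCount, h]

open Classical in
theorem weightedHomCount_parentGraph (hsymm : Symmetric HAdj) (p : ℕ → ℕ) (n : ℕ)
    (F : ℕ → VH → ℕ) : weightedHomCount HAdj (parentGraph p n) F =
      ∑ f : Fin (n + 1) → VH, ∏ j,
        if ∀ i : Fin (n + 1), i < j → i.val = p j → HAdj (f i) (f j) then F j (f j) else 0 := by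
  simp only [weightedHomCount, forall_parentGraph_adj_iff hsymm, prod_ite_zero, mem_univ,
    true_implies]

theorem weightedHomCount_parentGraph_zero (p : ℕ → ℕ) (F : ℕ → VH → ℕ) :
    weightedHomCount HAdj (parentGraph p 0) F = ∑ y, F 0 y := by
  have hbot (u v : Fin 1) : ¬ (parentGraph p 0).Adj u v := fun h => h.ne (Subsingleton.elim u v)
  simp only [weightedHomCount, hbot, false_implies, implies_true, if_true]
  rw [← (Equiv.funUnique (Fin 1) VH).symm.sum_comp]
  simp

theorem weightedHomCount_parentGraph_succ (hsymm : Symmetric HAdj) {p : ℕ → ℕ} {n : ℕ}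
    (hp : p (n + 1) ≤ n) (F : ℕ → VH → ℕ) :
    weightedHomCount HAdj (parentGraph p (n + 1)) F =
      weightedHomCount HAdj (parentGraph p n) (hangWeight HAdj F (p (n + 1)) (n + 1)) := by
  classical
  set q : Fin (n + 1) := ⟨p (n + 1), Nat.lt_succ_of_le hp⟩
  -- the last vertex is a leaf below `q`: summing out its colour `y` gives `(A F (n + 1)) (g q)`
  rw [weightedHomCount_parentGraph hsymm, weightedHomCount_parentGraph hsymm,
    ← (Fin.snocEquiv fun _ => VH).sum_comp, Fintype.sum_prod_type, Finset.sum_comm]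
  refine sum_congr rfl fun g _ => ?_
  have hold (y : VH) (j : Fin (n + 1)) :
      (∀ i : Fin (n + 2), i < j.castSucc → i.val = p j →
        HAdj (Fin.snoc (α := fun _ => VH) g y i) (g j)) ↔
      ∀ i : Fin (n + 1), i < j → i.val = p j → HAdj (g i) (g j) := by
    rw [Fin.forall_fin_succ']
    simp [Fin.snoc_castSucc, (Fin.castSucc_lt_last j).not_gt]
  have hnew (y : VH) :
      (∀ i : Fin (n + 2), i < Fin.last (n + 1) → i.val = p (n + 1) →
        HAdj (Fin.snoc (α := fun _ => VH) g y i) y) ↔ HAdj (g q) y := by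
    rw [Fin.forall_fin_succ']
    simp only [Fin.snoc_castSucc, Fin.snoc_last, Fin.castSucc_lt_last, lt_self_iff_false,
      Fin.val_castSucc, true_implies, false_implies, and_true]
    exact ⟨fun h => h q rfl, fun h i hi => (Fin.ext hi : i = q) ▸ h⟩
  simp only [Fin.snocEquiv_apply, Fin.prod_univ_castSucc (n := n + 1), Fin.snoc_castSucc,
    Fin.snoc_last, Fin.val_castSucc, Fin.val_last, hold, hnew]
  rw [← mul_sum, ← relMatrix_mulVec_apply,
    ← Fintype.prod_ite_eq' q fun j => (relMatrix HAdj *ᵥ F (n + 1)) (g j), ← prod_mul_distrib]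
  refine prod_congr rfl fun j _ => ?_
  by_cases hj : j = q
  · have hj' : (j : ℕ) = p (n + 1) := congrArg Fin.val hj
    rw [if_pos hj]
    simp only [hangWeight, hj', Function.update_self, Pi.mul_apply, ite_mul, zero_mul]
  · have hj' : (j : ℕ) ≠ p (n + 1) := fun h => hj (Fin.ext h)
    simp only [hangWeight, Function.update_of_ne hj', if_neg hj, mul_one]

end WeightedCount

section Bridge

variable {VH : Type} [Fintype VH] {HAdj : VH → VH → Prop}

theorem weightedHomCount_parentGraph_eq_forestCount (hsymm : Symmetric HAdj) {p : ℕ → ℕ} {n : ℕ}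
    (hp : ∀ i, 1 ≤ i → i ≤ n → p i < i) (F : ℕ → VH → ℕ) :
    weightedHomCount HAdj (parentGraph p n) F = forestCount HAdj F (Forest.ofParent p n) := by
  induction n generalizing F with
  | zero =>
    simp [weightedHomCount_parentGraph_zero, Forest.ofParent, forestCount, rootCount,
      dotProduct_one]
  | succ n ih =>
    rw [weightedHomCount_parentGraph_succ hsymm (Nat.lt_succ_iff.mp (hp (n + 1) (by omega) le_rfl)),
      ih (fun i h1 h2 => hp i h1 (by omega)), Forest.ofParent, forestCount_attach]

theorem pathGraph_eq_parentGraph (n : ℕ) :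
    SimpleGraph.pathGraph (n + 1) = parentGraph (· - 1) n := by
  ext u v
  simp only [SimpleGraph.pathGraph_adj, parentGraph, SimpleGraph.fromRel_adj, ne_eq, Fin.ext_iff,
    Fin.lt_def]
  omega

theorem weightedHomCount_pathGraph (hsymm : Symmetric HAdj) (n j : ℕ) :
    weightedHomCount HAdj (parentGraph (· - 1) n) (Function.update 1 n (walkCount HAdj j)) =
      ∑ y, walkCount HAdj (j + n) y := by
  induction n generalizing j with
  | zero => simp [weightedHomCount_parentGraph_zero]
  | succ n ih =>
    rw [weightedHomCount_parentGraph_succ hsymm (by simp), show j + (n + 1) = j + 1 + n by ring,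
      ← ih (j + 1)]
    refine weightedHomCount_congr _ fun i => ?_
    have hi := i.isLt
    by_cases hin : (i : ℕ) = n
    · simp [hangWeight, hin, walkCount_succ]
    · simp [hangWeight, hin, Function.update_of_ne (show (i : ℕ) ≠ n + 1 by omega)]

theorem homCount_pathGraph (hsymm : Symmetric HAdj) (n : ℕ) :
    homCount (SimpleGraph.pathGraph (n + 1)) HAdj = ∑ y, walkCount HAdj n y := by
  rw [homCount_eq_weightedHomCount_one, pathGraph_eq_parentGraph]
  simpa using weightedHomCount_pathGraph hsymm n 0

theorem homCount_eq_of_iso {V W : Type} [Fintype V] [Fintype W] {G : SimpleGraph V}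
    {G' : SimpleGraph W} (e : G ≃g G') : homCount G HAdj = homCount G' HAdj := by
  refine Nat.card_congr ((e.toEquiv.arrowCongr (Equiv.refl VH)).subtypeEquiv fun f =>
    ⟨fun h u v huv => h _ _ ?_, fun h u v huv => ?_⟩)
  · exact e.symm.map_adj_iff.mpr huv
  · have := h (e u) (e v) (e.map_adj_iff.mpr huv)
    simp only [Equiv.arrowCongr_apply, Equiv.coe_refl, Function.comp_apply, id_eq] at this
    convert this using 2 <;> exact (e.toEquiv.symm_apply_apply _).symm

end Bridge

theorem SimpleGraph.Connected.exists_adj_dist_add_one {V : Type*} {G : SimpleGraph V}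
    (hG : G.Connected) {r v : V} (hv : v ≠ r) : ∃ u, G.Adj u v ∧ G.dist r u + 1 = G.dist r v := by
  obtain ⟨w, hw⟩ := hG.exists_walk_length_eq_dist v r
  obtain ⟨u, hadj, q, rfl⟩ := SimpleGraph.Walk.exists_eq_cons_of_ne hv w
  refine ⟨u, hadj.symm, le_antisymm ?_ ?_⟩
  · have hq := SimpleGraph.dist_le q
    rw [SimpleGraph.Walk.length_cons] at hw
    rw [SimpleGraph.dist_comm, SimpleGraph.dist_comm (u := r)]
    omega
  · have h := hG.dist_triangle (u := r) (v := u) (w := v)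
    rwa [SimpleGraph.dist_eq_one_iff_adj.mpr hadj.symm] at h

theorem parentGraph_connected {p : ℕ → ℕ} {n : ℕ} (hp : ∀ i, 1 ≤ i → i ≤ n → p i < i) :
    (parentGraph p n).Connected := by
  have hreach : ∀ i (hi : i < n + 1), (parentGraph p n).Reachable 0 ⟨i, hi⟩ := by
    intro i
    induction i using Nat.strong_induction_on with
    | _ i ih =>
      intro hi
      rcases Nat.eq_zero_or_pos i with rfl | hpos
      · rfl
      · have hpi := hp i hpos (by omega)
        refine (ih (p i) hpi (by omega)).trans (SimpleGraph.Adj.reachable ?_)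
        simp only [parentGraph, SimpleGraph.fromRel_adj, ne_eq, Fin.ext_iff, Fin.lt_def, and_true]
        omega
  exact { preconnected := fun u v => (hreach u u.isLt).symm.trans (hreach v v.isLt) }

theorem exists_parentGraph_iso {n : ℕ} {T : SimpleGraph (Fin (n + 1))} (hT : T.IsTree) :
    ∃ p : ℕ → ℕ, (∀ i, 1 ≤ i → i ≤ n → p i < i) ∧ Nonempty (parentGraph p n ≃g T) := by
  -- Listing the vertices by distance from `0` puts every parent before its children. The parent
  -- edges form a connected subgraph of the tree, so by minimality they are all of its edges.
  have hconn := hT.connected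
  set d : Fin (n + 1) → ℕ := fun v => T.dist 0 v
  choose! par hpar using fun v (hv : v ≠ 0) => hconn.exists_adj_dist_add_one hv
  set σ := Tuple.sort d
  have hmono : Monotone (d ∘ σ) := Tuple.monotone_sort d
  have hσ0 : σ 0 = 0 := by
    have h := hmono (Fin.zero_le (σ.symm 0))
    simp only [Function.comp_apply, Equiv.apply_symm_apply, d, SimpleGraph.dist_self] at h
    exact ((hconn.preconnected 0 (σ 0)).dist_eq_zero_iff.mp (Nat.le_zero.mp h)).symm
  have hσne {j : Fin (n + 1)} (hj : j ≠ 0) : σ j ≠ 0 := hσ0 ▸ σ.injective.ne hj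
  set p : ℕ → ℕ := fun i => if h : i < n + 1 then (σ.symm (par (σ ⟨i, h⟩))).val else 0
  have hp : ∀ i, 1 ≤ i → i ≤ n → p i < i := by
    intro i h1 h2
    have hd := (hpar _ (hσne (j := ⟨i, by omega⟩) (by simp [Fin.ext_iff]; omega))).2
    simp only [p, dif_pos (show i < n + 1 by omega)]
    by_contra hle
    have := hmono (show (⟨i, by omega⟩ : Fin (n + 1)) ≤ σ.symm (par (σ ⟨i, by omega⟩)) from
      not_lt.mp hle)
    simp only [Function.comp_apply, Equiv.apply_symm_apply, d] at this hd
    omega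
  have hle : parentGraph p n ≤ T.comap σ := by
    have key (a b : Fin (n + 1)) (hab : a < b) (hp : a.val = p b) : T.Adj (σ a) (σ b) := by
      have ha : a = σ.symm (par (σ b)) := Fin.ext (by rw [hp]; simp only [p, dif_pos b.isLt])
      rw [ha, Equiv.apply_symm_apply]
      exact (hpar _ (hσne (Fin.pos_iff_ne_zero.mp (lt_of_le_of_lt (Fin.zero_le a) hab)))).1
    rintro i j ⟨-, ⟨hij, hp⟩ | ⟨hji, hp⟩⟩
    · exact key i j hij hp
    · exact (key j i hji hp).symm
  have hTσ : (T.comap σ).IsTree := (SimpleGraph.Iso.comap σ T).isTree_iff.mpr hT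
  have heq : parentGraph p n = T.comap σ :=
    (SimpleGraph.isTree_iff_minimal_connected.mp hTσ).eq_of_le (parentGraph_connected hp) hle
  exact ⟨p, hp, ⟨heq ▸ SimpleGraph.Iso.comap σ T⟩⟩

theorem ordering_framework_general
    {VH : Type} [Fintype VH]
    (HAdj : VH → VH → Prop) (hsymm : Symmetric HAdj)
    (k : ℕ) (cls : VH → Fin k)
    (m : Fin k → Fin k → ℕ)
    (hm : ∀ (i j : Fin k) (v : VH), cls v = i →
      Nat.card {w : VH // HAdj v w ∧ cls w = j} = m i j)
    (hinc : ∀ (c i : Fin k) (hi : i.val + 1 < k),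
      ∑ j : Fin k, (if c ≤ j then m i j else 0) ≤
      ∑ j : Fin k, (if c ≤ j then m ⟨i.val + 1, hi⟩ j else 0)) :
    ∀ n : ℕ, 1 ≤ n → ∀ T : SimpleGraph (Fin n), T.IsTree →
      homCount (SimpleGraph.pathGraph n) HAdj ≤ homCount T HAdj := by
  intro n hn T hT
  obtain ⟨n, rfl⟩ := Nat.exists_eq_add_of_le' hn
  obtain ⟨p, hp, ⟨e⟩⟩ := exists_parentGraph_iso hT
  obtain ⟨c, hc⟩ := Forest.exists_ofParent_eq_node p n
  have hlen : c.labels.length = n := by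
    simpa [hc, Forest.labels] using Forest.length_labels_ofParent hp
  calc homCount (SimpleGraph.pathGraph (n + 1)) HAdj = walkCount HAdj c.labels.length ⬝ᵥ 1 := by
        rw [homCount_pathGraph hsymm, dotProduct_one, hlen]
    _ ≤ rootCount HAdj 1 c ⬝ᵥ 1 :=
        walkCount_dotProduct_le_rootCount hsymm hm hinc c (classMonotone_one (cls := cls))
    _ = homCount T HAdj := by
        rw [← homCount_eq_of_iso e, homCount_eq_weightedHomCount_one,
          weightedHomCount_parentGraph_eq_forestCount hsymm hp, hc]
        simp [forestCount, dotProduct_comm]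

/-- **Theorem (orderings).** If the automorphic similarity classes of a target graph `H`
(possibly with loops) can be ordered so that the automorphic similarity matrix has the
increasing columns property, then `H` is Hoffman-London: for every `n ≥ 1` and every tree
`T` on `n` vertices, `hom(P_n, H) ≤ hom(T, H)`. -/
theorem ordering_framework
    {VH : Type} [Fintype VH]
    (HAdj : VH → VH → Prop) (hsymm : Symmetric HAdj)
    (k : ℕ) (cls : VH → Fin k) (hsurj : Function.Surjective cls)
    (hcls : ∀ u v : VH, cls u = cls v ↔
      ∃ φ : VH ≃ VH, (∀ x y : VH, HAdj x y ↔ HAdj (φ x) (φ y)) ∧ φ u = v)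
    (m : Fin k → Fin k → ℕ)
    (hm : ∀ (i j : Fin k) (v : VH), cls v = i →
      Nat.card {w : VH // HAdj v w ∧ cls w = j} = m i j)
    (hinc : ∀ (c i : Fin k) (hi : i.val + 1 < k),
      ∑ j : Fin k, (if c ≤ j then m i j else 0) ≤
      ∑ j : Fin k, (if c ≤ j then m ⟨i.val + 1, hi⟩ j else 0)) :
    ∀ n : ℕ, 1 ≤ n → ∀ T : SimpleGraph (Fin n), T.IsTree →
      homCount (SimpleGraph.pathGraph n) HAdj ≤ homCount T HAdj :=
  ordering_framework_general HAdj hsymm k cls m hm hinc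
end

section
/- For all positive integers a and b, the complete bipartite graph K_{a,b} is Hoffman-London. Moreover, when a ≠ b, a tree T on n vertices minimizes hom(T, K_{a,b}) over all trees on n vertices if and only if the (unique) bipartition V(T) = X ∪ Y of T is balanced, i.e. |X| = |Y| if n is even and ||X| − |Y|| = 1 if n is odd. -/
open Finset SimpleGraph

/-- `hom(G, K_{a,b})` for a connected bipartite graph `G` with colour classes of sizes `p`, `q`. -/
def bipartiteHomFormula (a b p q : ℕ) : ℕ := a ^ p * b ^ q + a ^ q * b ^ p

namespace bipartiteHomFormula

variable {a b : ℕ}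

theorem comm (a b p q : ℕ) : bipartiteHomFormula a b p q = bipartiteHomFormula a b q p :=
  add_comm _ _

theorem swap (a b p q : ℕ) : bipartiteHomFormula b a p q = bipartiteHomFormula a b p q := by
  simp only [bipartiteHomFormula]; ring

theorem add_one_add_one_le {p q : ℕ} (hpq : p ≤ q) :
    bipartiteHomFormula a b (p + 1) (q + 1) ≤ bipartiteHomFormula a b p (q + 2) := by
  wlog hab : a ≤ b generalizing a b
  · simpa only [swap] using this (le_of_not_ge hab)
  obtain ⟨d, rfl⟩ := Nat.exists_eq_add_of_le hpq
  have key : a * b ^ (d + 1) + b * a ^ (d + 1) ≤ a * a ^ (d + 1) + b * b ^ (d + 1) :=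
    mul_add_mul_le_mul_add_mul hab (Nat.pow_le_pow_left hab _)
  calc bipartiteHomFormula a b (p + 1) (p + d + 1)
      = a ^ p * b ^ p * (a * b ^ (d + 1) + b * a ^ (d + 1)) := by
        simp only [bipartiteHomFormula]; ring
    _ ≤ a ^ p * b ^ p * (a * a ^ (d + 1) + b * b ^ (d + 1)) := Nat.mul_le_mul_left _ key
    _ = bipartiteHomFormula a b p (p + d + 2) := by simp only [bipartiteHomFormula]; ring

theorem add_one_add_one_lt (ha : 0 < a) (hb : 0 < b) (hab : a ≠ b) {p q : ℕ} (hpq : p ≤ q) :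
    bipartiteHomFormula a b (p + 1) (q + 1) < bipartiteHomFormula a b p (q + 2) := by
  wlog hlt : a < b generalizing a b
  · simpa only [swap] using this hb ha hab.symm (by omega)
  obtain ⟨d, rfl⟩ := Nat.exists_eq_add_of_le hpq
  have key : a * b ^ (d + 1) + b * a ^ (d + 1) < a * a ^ (d + 1) + b * b ^ (d + 1) :=
    mul_add_mul_lt_mul_add_mul hlt (Nat.pow_lt_pow_left hlt (Nat.succ_ne_zero d))
  calc bipartiteHomFormula a b (p + 1) (p + d + 1)
      = a ^ p * b ^ p * (a * b ^ (d + 1) + b * a ^ (d + 1)) := by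
        simp only [bipartiteHomFormula]; ring
    _ < a ^ p * b ^ p * (a * a ^ (d + 1) + b * b ^ (d + 1)) :=
        Nat.mul_lt_mul_of_pos_left key (by positivity)
    _ = bipartiteHomFormula a b p (p + d + 2) := by simp only [bipartiteHomFormula]; ring

theorem le_of_add_eq_of_le_of_le {p q p' q' : ℕ} (hsum : p + q = p' + q') (hp' : p' ≤ p)
    (hpq : p ≤ q) :
    bipartiteHomFormula a b p q ≤ bipartiteHomFormula a b p' q' := by
  induction p, hp' using Nat.le_induction generalizing q with
  | base => rw [Nat.add_left_cancel hsum]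
  | succ p _ ih =>
    obtain ⟨r, rfl⟩ : ∃ r, q = r + 1 := ⟨q - 1, by omega⟩
    exact (add_one_add_one_le (by omega)).trans (ih (by omega) (by omega))

theorem le_of_natAbs_le {p q p' q' : ℕ} (hsum : p + q = p' + q')
    (h : ((p : ℤ) - q).natAbs ≤ ((p' : ℤ) - q').natAbs) :
    bipartiteHomFormula a b p q ≤ bipartiteHomFormula a b p' q' := by
  wlog hpq : p ≤ q generalizing p q
  · rw [comm]; exact this (by omega) (by omega) (by omega)
  wlog hpq' : p' ≤ q' generalizing p' q'
  · rw [comm a b p']; exact this (by omega) (by omega) (by omega)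
  exact le_of_add_eq_of_le_of_le hsum (by omega) hpq

theorem lt_of_natAbs_lt (ha : 0 < a) (hb : 0 < b) (hab : a ≠ b) {p q p' q' : ℕ}
    (hsum : p + q = p' + q') (h : ((p : ℤ) - q).natAbs < ((p' : ℤ) - q').natAbs) :
    bipartiteHomFormula a b p q < bipartiteHomFormula a b p' q' := by
  wlog hpq : p ≤ q generalizing p q
  · rw [comm]; exact this (by omega) (by omega) (by omega)
  wlog hpq' : p' ≤ q' generalizing p' q'
  · rw [comm a b p']; exact this (by omega) (by omega) (by omega)
  obtain ⟨p, rfl⟩ : ∃ r, p = r + 1 := ⟨p - 1, by omega⟩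
  obtain ⟨q, rfl⟩ : ∃ r, q = r + 1 := ⟨q - 1, by omega⟩
  exact (add_one_add_one_lt ha hb hab (by omega)).trans_le
    (le_of_add_eq_of_le_of_le (by omega) (by omega) (by omega))

end bipartiteHomFormula

theorem Sum.natCard_subtype_isLeft_eq {α β : Type*} (t : Bool) :
    Nat.card {x : α ⊕ β // x.isLeft = t} = cond t (Nat.card α) (Nat.card β) := by
  cases t
  · exact Nat.card_congr ((Equiv.subtypeEquivRight fun x => by simp).trans Equiv.sumIsRight)
  · exact Nat.card_congr Equiv.sumIsLeft

theorem natCard_subtype_forall_isLeft_eq {V α β : Type*} [Fintype V] (c : V → Bool) :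
    Nat.card {f : V → α ⊕ β // ∀ v, (f v).isLeft = c v} =
      Nat.card α ^ #{v | c v = true} * Nat.card β ^ #{v | c v = false} := by
  rw [Nat.card_congr (Equiv.subtypePiEquivPi (p := fun v x => Sum.isLeft x = c v)), Nat.card_pi]
  simp only [Sum.natCard_subtype_isLeft_eq, Bool.cond_eq_ite, prod_ite, prod_const]
  simp

theorem card_filter_eq_true_add_card_filter_eq_false {V : Type*} [Fintype V] (c : V → Bool) :
    #{v | c v = true} + #{v | c v = false} = Fintype.card V := by
  simpa using card_filter_add_card_filter_not (s := univ) (fun v => c v = true)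

namespace SimpleGraph

variable {V : Type*} {G : SimpleGraph V}

theorem completeBipartiteGraph_adj_iff_isLeft_ne {α β : Type*} {x y : α ⊕ β} :
    (completeBipartiteGraph α β).Adj x y ↔ x.isLeft ≠ y.isLeft := by
  cases x <;> cases y <;> simp

theorem Connected.coloring_eq_or_eq_not (hG : G.Connected) (c c' : G.Coloring Bool) :
    ⇑c' = ⇑c ∨ ⇑c' = fun v => !c v := by
  obtain ⟨v₀⟩ := hG.nonempty
  have hcongr (v : V) : (c' v₀ = c' v) ↔ (c v₀ = c v) := by
    obtain ⟨p⟩ := hG v₀ v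
    have h := (c'.even_length_iff_congr p).symm.trans (c.even_length_iff_congr p)
    rwa [← Bool.eq_iff_iff, ← Bool.eq_iff_iff] at h
  refine (em (c' v₀ = c v₀)).imp (fun h₀ => ?_) (fun h₀ => ?_)
  all_goals
    funext v
    have := hcongr v
    revert h₀ this
    cases c' v₀ <;> cases c v₀ <;> cases c' v <;> cases c v <;> simp

theorem Connected.eq_filter_or_eq_filter [Fintype V] [DecidableEq V] (hG : G.Connected)
    (c : G.Coloring Bool) (X : Finset V) (hX : ∀ u v, G.Adj u v → (u ∈ X ↔ v ∉ X)) :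
    X = ({v | c v = true} : Finset V) ∨ X = ({v | c v = false} : Finset V) := by
  have hvalid {u v : V} (huv : G.Adj u v) : decide (u ∈ X) ≠ decide (v ∈ X) := by
    have := hX u v huv
    simp only [ne_eq, decide_eq_decide]
    tauto
  rcases hG.coloring_eq_or_eq_not c (Coloring.mk (fun v => decide (v ∈ X)) hvalid) with h | h
  · left; ext v
    rw [mem_filter_univ, ← decide_eq_true_iff (p := v ∈ X)]
    exact (congrArg (· = true) (congrFun h v)).to_iff
  · right; ext v
    rw [mem_filter_univ, ← decide_eq_true_iff (p := v ∈ X), ← Bool.not_eq_true']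
    exact (congrArg (· = true) (congrFun h v)).to_iff

theorem Connected.isHom_completeBipartiteGraph_iff {α β : Type*} (hG : G.Connected)
    (c : G.Coloring Bool) (f : V → α ⊕ β) :
    (∀ u v, G.Adj u v → (completeBipartiteGraph α β).Adj (f u) (f v)) ↔
      (∀ v, (f v).isLeft = c v) ∨ ∀ v, (f v).isLeft = !c v := by
  simp only [completeBipartiteGraph_adj_iff_isLeft_ne]
  constructor
  · intro hf
    exact (hG.coloring_eq_or_eq_not c (Coloring.mk (fun v => (f v).isLeft) (hf _ _))).imp
      congrFun congrFun
  · rintro (h | h) u v huv <;> simpa [h] using c.valid huv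

theorem pathGraph_isTree (n : ℕ) : (pathGraph (n + 1)).IsTree := by
  refine isTree_iff_connected_and_card.mpr ⟨pathGraph_connected n, ?_⟩
  suffices Nat.card (Fin n) = Nat.card (pathGraph (n + 1)).edgeSet by simp [← this]
  refine Nat.card_eq_of_bijective
    (fun i => ⟨s(i.castSucc, i.succ), by simp [pathGraph_adj]⟩) ⟨fun i j h => ?_, ?_⟩
  · simp only [Subtype.mk.injEq, Sym2.eq_iff, Fin.ext_iff, Fin.val_castSucc, Fin.val_succ] at h
    omega
  · rintro ⟨e, he⟩
    induction e using Sym2.ind with | h x y => ?_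
    have h := pathGraph_adj.mp ((mem_edgeSet _).mp he)
    refine ⟨⟨min x y, by omega⟩, ?_⟩
    ext
    simp only [Fin.castSucc_mk, Fin.succ_mk, Sym2.mem_iff, Fin.ext_iff]
    omega

theorem pathGraph.card_bicoloring_false (n : ℕ) :
    #{v | pathGraph.bicoloring n v = false} = n / 2 := by
  rw [← Nat.card_multiples n 2, ← Nat.Iio_eq_range, ← Fin.map_valEmbedding_univ, filter_map,
    card_map]
  congr 1
  ext v
  simp only [pathGraph.bicoloring, Coloring.mk, RelHom.coeFn_mk, decide_eq_false_iff_not,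
    Nat.mod_two_not_eq_zero, mem_filter_univ, Fin.valEmbedding_apply, Function.comp_apply]
  omega

theorem pathGraph.natAbs_card_bicoloring_sub_le_one (n : ℕ) :
    ((#{v | pathGraph.bicoloring n v = true} : ℤ) -
      #{v | pathGraph.bicoloring n v = false}).natAbs ≤ 1 := by
  have hsum := card_filter_eq_true_add_card_filter_eq_false (pathGraph.bicoloring n)
  rw [Fintype.card_fin, pathGraph.card_bicoloring_false] at hsum
  rw [pathGraph.card_bicoloring_false]
  omega

section CompleteBipartite

variable {V α β : Type} [Fintype V] [Fintype α] [Fintype β]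

theorem Connected.homCount_completeBipartiteGraph {G : SimpleGraph V} (hG : G.Connected)
    (c : G.Coloring Bool) :
    homCount G (completeBipartiteGraph α β).Adj =
      bipartiteHomFormula (Nat.card α) (Nat.card β) #{v | c v = true} #{v | c v = false} := by
  obtain ⟨v₀⟩ := hG.nonempty
  have hdisj : Disjoint (fun f : V → α ⊕ β => ∀ v, (f v).isLeft = c v)
      (fun f => ∀ v, (f v).isLeft = !c v) := by
    simp only [Pi.disjoint_iff, Prop.disjoint_iff]
    intro f ⟨h, h'⟩
    simpa using (h v₀).symm.trans (h' v₀)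
  rw [homCount, Nat.card_congr (Equiv.subtypeEquivRight (hG.isHom_completeBipartiteGraph_iff c)),
    Nat.card_congr (subtypeOrEquiv _ _ hdisj), Nat.card_sum, natCard_subtype_forall_isLeft_eq,
    natCard_subtype_forall_isLeft_eq]
  simp [bipartiteHomFormula]

theorem Connected.homCount_le_of_natAbs_le_one {G G' : SimpleGraph V} (hG : G.Connected)
    (hG' : G'.Connected) (c : G.Coloring Bool) (c' : G'.Coloring Bool)
    (hc : ((#{v | c v = true} : ℤ) - #{v | c v = false}).natAbs ≤ 1) :
    homCount G (completeBipartiteGraph α β).Adj ≤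
      homCount G' (completeBipartiteGraph α β).Adj := by
  have := card_filter_eq_true_add_card_filter_eq_false c
  have := card_filter_eq_true_add_card_filter_eq_false c'
  rw [hG.homCount_completeBipartiteGraph c, hG'.homCount_completeBipartiteGraph c']
  -- both imbalances have the parity of `card V`, so `c'` is at least as unbalanced as `c`
  exact bipartiteHomFormula.le_of_natAbs_le (by omega) (by omega)

theorem Connected.homCount_pathGraph_le {n : ℕ} {G : SimpleGraph (Fin n)} (hG : G.Connected)
    (c : G.Coloring Bool) :
    homCount (pathGraph n) (completeBipartiteGraph α β).Adj ≤
      homCount G (completeBipartiteGraph α β).Adj := by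
  obtain ⟨m, rfl⟩ := Nat.exists_eq_add_one.mpr (Fin.pos_iff_nonempty.mpr hG.nonempty)
  exact (pathGraph_connected m).homCount_le_of_natAbs_le_one hG _ c
    (pathGraph.natAbs_card_bicoloring_sub_le_one _)

theorem Connected.homCount_pathGraph_lt [Nonempty α] [Nonempty β]
    (hαβ : Nat.card α ≠ Nat.card β) {n : ℕ} {G : SimpleGraph (Fin n)} (hG : G.Connected)
    (c : G.Coloring Bool) (hc : 1 < ((#{v | c v = true} : ℤ) - #{v | c v = false}).natAbs) :
    homCount (pathGraph n) (completeBipartiteGraph α β).Adj <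
      homCount G (completeBipartiteGraph α β).Adj := by
  obtain ⟨m, rfl⟩ := Nat.exists_eq_add_one.mpr (Fin.pos_iff_nonempty.mpr hG.nonempty)
  have := card_filter_eq_true_add_card_filter_eq_false c
  have := card_filter_eq_true_add_card_filter_eq_false (pathGraph.bicoloring (m + 1))
  have := pathGraph.natAbs_card_bicoloring_sub_le_one (m + 1)
  rw [(pathGraph_connected m).homCount_completeBipartiteGraph (pathGraph.bicoloring _),
    hG.homCount_completeBipartiteGraph c]
  exact bipartiteHomFormula.lt_of_natAbs_lt Nat.card_pos Nat.card_pos hαβ (by omega) (by omega)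

end CompleteBipartite

end SimpleGraph

/-- **Theorem.** Every complete bipartite graph `K_{a,b}` is Hoffman-London.
Moreover, when `a ≠ b`, a tree `T` on `n` vertices minimizes the number of
`K_{a,b}`-colorings over all trees on `n` vertices if and only if the bipartition
`V(T) = X ∪ Y` of `T` is balanced, i.e. `|2|X| - n| ≤ 1`. -/
theorem complete_bipartite_hoffman_london (a b : ℕ) (ha : 1 ≤ a) (hb : 1 ≤ b) :
    (∀ n : ℕ, 1 ≤ n → ∀ T : SimpleGraph (Fin n), T.IsTree →
      homCount (SimpleGraph.pathGraph n) (completeBipartiteGraph (Fin a) (Fin b)).Adj ≤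
        homCount T (completeBipartiteGraph (Fin a) (Fin b)).Adj) ∧
    (a ≠ b → ∀ n : ℕ, 1 ≤ n → ∀ T : SimpleGraph (Fin n), T.IsTree →
      ((∀ T' : SimpleGraph (Fin n), T'.IsTree →
          homCount T (completeBipartiteGraph (Fin a) (Fin b)).Adj ≤
            homCount T' (completeBipartiteGraph (Fin a) (Fin b)).Adj) ↔
        (∀ X : Finset (Fin n),
          (∀ u v : Fin n, T.Adj u v → (u ∈ X ↔ v ∉ X)) →
          (2 * (X.card : ℤ) - (n : ℤ)).natAbs ≤ 1))) := by
  refine ⟨fun n _ T hT => hT.connected.homCount_pathGraph_le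
    (T.recolorOfEquiv finTwoEquiv hT.coloringTwo), fun hab n hn T hT => ?_⟩
  obtain ⟨m, rfl⟩ := Nat.exists_eq_add_one.mpr hn
  have : Nonempty (Fin a) := Fin.pos_iff_nonempty.mp ha
  have : Nonempty (Fin b) := Fin.pos_iff_nonempty.mp hb
  set c := T.recolorOfEquiv finTwoEquiv hT.coloringTwo
  have hcard := card_filter_eq_true_add_card_filter_eq_false c
  rw [Fintype.card_fin] at hcard
  constructor
  · intro hmin X hX
    have hbal : ((#{v | c v = true} : ℤ) - #{v | c v = false}).natAbs ≤ 1 := by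
      by_contra! h
      exact (hT.connected.homCount_pathGraph_lt (by simpa using hab) c h).not_ge
        (hmin _ (pathGraph_isTree m))
    rcases hT.connected.eq_filter_or_eq_filter c X hX with rfl | rfl <;> omega
  · intro hbal T' hT'
    have := hbal {v | c v = true} fun u v huv => by simpa [Bool.eq_not_iff] using c.valid huv
    exact hT.connected.homCount_le_of_natAbs_le_one hT'.connected c
      (T'.recolorOfEquiv finTwoEquiv hT'.coloringTwo) (by omega)
end

section
/- Let H be a target graph that is not regular and has exactly two automorphic similarity classes H^1 and H^2, ordered so that the common degree of the vertices in H^1 is smaller than the common degree of the vertices in H^2 (loops contributing 1 to degree). If m_{1,2} ≤ m_{2,2} (every vertex of H^1 has at most as many neighbors in H^2 as every vertex of H^2 does), then H is Hoffman-London. If, in addition, some vertex of H has a neighbor in H^1 and a neighbor in H^2, then H is strongly Hoffman-London. -/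
open Finset Matrix SimpleGraph

namespace SimpleGraph

variable {V : Type*} {T : SimpleGraph V} {rt x : V}

lemma reachable_or_reachable_deleteEdges (hT : T.Connected) (v : V) :
    (T.deleteEdges {s(rt, x)}).Reachable rt v ∨ (T.deleteEdges {s(rt, x)}).Reachable x v := by
  set D := T.deleteEdges {s(rt, x)}
  suffices ∀ {u w} (p : T.Walk u w), D.Reachable rt u ∨ D.Reachable x u →
      D.Reachable rt w ∨ D.Reachable x w from
    this (hT.preconnected rt v).some (Or.inl .rfl)
  intro u w p
  induction p with
  | nil => exact id
  | @cons a b _ h _ ih =>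
    refine fun ha => ih ?_
    by_cases he : s(a, b) = s(rt, x)
    · rcases Sym2.eq_iff.mp he with ⟨-, rfl⟩ | ⟨-, rfl⟩
      · exact Or.inr .rfl
      · exact Or.inl .rfl
    · have hD : D.Adj a b := deleteEdges_adj.mpr ⟨h, he⟩
      exact ha.imp (·.trans hD.reachable) (·.trans hD.reachable)

lemma IsTree.isTree_induce_supp (hT : T.IsTree) {D : SimpleGraph V} (hD : D ≤ T)
    (C : D.ConnectedComponent) : (T.induce C.supp).IsTree :=
  ⟨C.connected_toSimpleGraph.mono fun _ _ h => hD h, hT.isAcyclic.induce _⟩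

lemma IsTree.exists_cut (hT : T.IsTree) (hadj : T.Adj rt x) :
    ∃ S : Set V, rt ∈ S ∧ x ∉ S ∧ (T.induce S).IsTree ∧ (T.induce Sᶜ).IsTree ∧
      ∀ u w, T.Adj u w → u ∈ S → w ∉ S → u = rt ∧ w = x := by
  set D := T.deleteEdges {s(rt, x)}
  have hDT : D ≤ T := deleteEdges_le _
  have hbridge : ¬ D.Reachable rt x :=
    isBridge_iff.mp (isAcyclic_iff_forall_adj_isBridge.mp hT.isAcyclic hadj)
  have hx : x ∉ (D.connectedComponentMk rt).supp := fun h =>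
    hbridge (ConnectedComponent.exact h).symm
  refine ⟨(D.connectedComponentMk rt).supp, ConnectedComponent.connectedComponentMk_mem, hx,
    hT.isTree_induce_supp hDT _, ?_, fun u w h hu hw => ?_⟩
  · have hcompl : (D.connectedComponentMk rt).suppᶜ = (D.connectedComponentMk x).supp := by
      ext v
      simp only [Set.mem_compl_iff, ConnectedComponent.mem_supp_iff, ConnectedComponent.eq]
      have := reachable_or_reachable_deleteEdges (rt := rt) (x := x) hT.connected v
      exact ⟨fun hv => (this.resolve_left fun h => hv h.symm).symm,
        fun hv hv' => hbridge (hv'.symm.trans hv)⟩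
    rw [hcompl]
    exact hT.isTree_induce_supp hDT _
  · by_contra hne
    refine hw (ConnectedComponent.mem_supp_of_adj_mem_supp _ hu (deleteEdges_adj.mpr ⟨h, ?_⟩))
    rintro he
    rcases Sym2.eq_iff.mp he with ⟨rfl, rfl⟩ | ⟨rfl, -⟩
    · exact hne ⟨rfl, rfl⟩
    · exact hx hu

lemma IsTree.isTree_induce_compl_singleton [Finite V] (hT : T.IsTree)
    (hleaf : ∀ y, T.Adj rt y ↔ y = x) : (T.induce {rt}ᶜ).IsTree := by
  classical
  have := Fintype.ofFinite V
  have hdeg : T.degree rt = 1 :=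
    degree_eq_one_iff_existsUnique_adj.mpr ⟨x, (hleaf x).mpr rfl, fun y hy => (hleaf y).mp hy⟩
  exact ⟨hT.connected.induce_compl_singleton_of_degree_eq_one hdeg, hT.isAcyclic.induce _⟩

def IsPathFrom (T : SimpleGraph V) (rt : V) : Prop :=
  ∃ n, ∃ e : pathGraph (n + 1) ≃g T, e 0 = rt

lemma isPathFrom_of_subsingleton [Subsingleton V] (T : SimpleGraph V) (rt : V) :
    T.IsPathFrom rt :=
  ⟨0, { toEquiv := Equiv.ofBijective (fun _ => rt)
          ⟨fun a b _ => Subsingleton.elim (α := Fin 1) a b, fun _ => ⟨0, Subsingleton.elim _ _⟩⟩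
        map_rel_iff' := fun {a b} => by rw [Subsingleton.elim (α := Fin 1) a b]; simp }, rfl⟩

lemma IsPathFrom.nonempty_iso [Fintype V] (h : T.IsPathFrom rt) :
    Nonempty (T ≃g pathGraph (Fintype.card V)) := by
  obtain ⟨n, e, -⟩ := h
  rw [← Fintype.card_congr e.toEquiv, Fintype.card_fin]
  exact ⟨e.symm⟩

lemma IsPathFrom.of_induce_compl_singleton (hleaf : ∀ y, T.Adj rt y ↔ y = x)
    (hx : x ∈ ({rt}ᶜ : Set V)) (h : (T.induce {rt}ᶜ).IsPathFrom ⟨x, hx⟩) : T.IsPathFrom rt := by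
  obtain ⟨n, e, he⟩ := h
  let f : Fin (n + 2) → V := Fin.cons rt fun i => (e i).1
  have hroot : ∀ j, T.Adj rt (e j) ↔ (pathGraph (n + 2)).Adj 0 j.succ := fun j => by
    have hx' : (e j).1 = x ↔ e j = e 0 := by rw [he, Subtype.ext_iff]
    rw [hleaf, pathGraph_adj, hx', e.apply_eq_iff_eq, Fin.ext_iff]
    simp only [Fin.val_succ, Fin.val_zero]
    omega
  have hf : ∀ i j, T.Adj (f i) (f j) ↔ (pathGraph (n + 2)).Adj i j := by
    intro i j
    induction i using Fin.cases <;> induction j using Fin.cases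
    · exact iff_of_false T.irrefl (pathGraph _).irrefl
    · exact hroot _
    · rw [T.adj_comm, (pathGraph _).adj_comm]
      exact hroot _
    · simp only [f, Fin.cons_succ]
      exact e.map_adj_iff.trans (by simp [pathGraph_adj])
  have hinj : Function.Injective f :=
    Fin.cons_injective_iff.mpr ⟨fun ⟨i, hi⟩ => (e i).2 hi, Subtype.val_injective.comp e.injective⟩
  have hsurj : Function.Surjective f := fun v => by
    by_cases hv : v = rt
    · exact ⟨0, hv.symm⟩
    · exact ⟨(e.symm ⟨v, hv⟩).succ, by simp [f]⟩
  exact ⟨n + 1, { toEquiv := Equiv.ofBijective f ⟨hinj, hsurj⟩, map_rel_iff' := hf _ _ }, rfl⟩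

end SimpleGraph

namespace HoffmanLondon

lemma card_subtype_eq_sum_card_fiber {α β : Type*} [Finite α] [Fintype β] (P : α → Prop)
    (g : α → β) : Nat.card {a // P a} = ∑ b, Nat.card {a // P a ∧ g a = b} := by
  rw [← Nat.card_congr (Equiv.sigmaFiberEquiv fun a : {a // P a} => g a), Nat.card_sigma]
  exact Finset.sum_congr rfl fun b _ =>
    Nat.card_congr (Equiv.subtypeSubtypeEquivSubtypeInter P (g · = b))

lemma card_add_card_compl {V : Type*} [Finite V] (S : Set V) :
    Nat.card S + Nat.card ↥Sᶜ = Nat.card V := by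
  rw [Nat.card_coe_set_eq, Nat.card_coe_set_eq, Set.ncard_add_ncard_compl]

section Profiles

variable {ι : Type*} [Fintype ι] (m : Matrix ι ι ℕ)

def pathProfile : ℕ → ι → ℕ
  | 0 => 1
  | k + 1 => m *ᵥ pathProfile k

/-- The root profiles of rooted trees with `k` edges: `join` links the roots of two rooted trees
by an edge and keeps the root of the first. -/
inductive IsTreeProfile : ℕ → (ι → ℕ) → Prop
  | single : IsTreeProfile 0 1
  | join {i j : ℕ} {x y : ι → ℕ} :
      IsTreeProfile i x → IsTreeProfile j y → IsTreeProfile (i + j + 1) (x * m *ᵥ y)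

/-- The root profiles of rooted trees that are not paths starting at their root: the root has
degree at least two (`branch`), or it is a leaf attached to the root of such a tree (`extend`). -/
inductive IsBranchedProfile : ℕ → (ι → ℕ) → Prop
  | branch {i j : ℕ} {x y : ι → ℕ} : IsTreeProfile m i x → 0 < i → IsTreeProfile m j y →
      IsBranchedProfile (i + j + 1) (x * m *ᵥ y)
  | extend {j : ℕ} {y : ι → ℕ} : IsBranchedProfile j y → IsBranchedProfile (j + 1) (m *ᵥ y)

variable {m} {w : ι → ℕ}

lemma dotProduct_mul_mulVec_comm (hbal : ∀ i j, w i * m i j = w j * m j i) (x y : ι → ℕ) :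
    w ⬝ᵥ (x * m *ᵥ y) = w ⬝ᵥ (m *ᵥ x * y) := by
  simp only [dotProduct, mulVec, Pi.mul_apply, Finset.mul_sum, Finset.sum_mul]
  rw [Finset.sum_comm]
  refine Finset.sum_congr rfl fun j _ => Finset.sum_congr rfl fun i _ => ?_
  linear_combination (x i * y j) * hbal i j

lemma dotProduct_pathProfile_add (hbal : ∀ i j, w i * m i j = w j * m j i) (i j : ℕ) :
    w ⬝ᵥ pathProfile m (i + j) = w ⬝ᵥ (pathProfile m i * pathProfile m j) := by
  induction j generalizing i with
  | zero => simp [pathProfile]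
  | succ j ih =>
    rw [← Nat.succ_add_eq_add_succ, ih, pathProfile, pathProfile,
      dotProduct_mul_mulVec_comm hbal]

end Profiles

section FinTwo

variable {m : Matrix (Fin 2) (Fin 2) ℕ} {w x z : Fin 2 → ℕ}

lemma monotone_fin_two_iff : Monotone x ↔ x 0 ≤ x 1 := by
  simp [Fin.monotone_iff_le_succ]

lemma strictMono_fin_two_iff : StrictMono x ↔ x 0 < x 1 := by
  simp [Fin.strictMono_iff_lt_succ]

lemma mulVec_fin_two_apply (i : Fin 2) : (m *ᵥ x) i = m i 0 * x 0 + m i 1 * x 1 := by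
  simp [mulVec, dotProduct, Fin.sum_univ_two]

lemma monotone_mulVec (h01 : m 0 1 ≤ m 1 1) (hdeg : (m *ᵥ 1) 0 < (m *ᵥ 1) 1)
    (hx : Monotone x) : Monotone (m *ᵥ x) := by
  rw [monotone_fin_two_iff] at hx ⊢
  obtain ⟨d, hd⟩ := Nat.exists_eq_add_of_le hx
  simp only [mulVec_fin_two_apply, Pi.one_apply, mul_one, hd] at hdeg ⊢
  nlinarith [Nat.mul_le_mul_right (x 0) hdeg.le, Nat.mul_le_mul_right d h01]

lemma strictMono_mulVec (h01 : m 0 1 ≤ m 1 1) (hdeg : (m *ᵥ 1) 0 < (m *ᵥ 1) 1)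
    (hx0 : 0 < x 0) (hx : Monotone x) : StrictMono (m *ᵥ x) := by
  rw [monotone_fin_two_iff] at hx
  rw [strictMono_fin_two_iff]
  obtain ⟨d, hd⟩ := Nat.exists_eq_add_of_le hx
  simp only [mulVec_fin_two_apply, Pi.one_apply, mul_one, hd] at hdeg ⊢
  nlinarith [Nat.mul_lt_mul_of_pos_right hdeg hx0, Nat.mul_le_mul_right d h01]

lemma pathProfile_monotone (h01 : m 0 1 ≤ m 1 1) (hdeg : (m *ᵥ 1) 0 < (m *ᵥ 1) 1) (k : ℕ) :
    Monotone (pathProfile m k) := by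
  induction k with
  | zero => exact monotone_const
  | succ k ih => exact monotone_mulVec h01 hdeg ih

lemma pathProfile_pos (h01 : m 0 1 ≤ m 1 1) (hq : 0 < m 0 1) (k : ℕ) (i : Fin 2) :
    0 < pathProfile m k i := by
  induction k generalizing i with
  | zero => exact Nat.one_pos
  | succ k ih =>
    have hm : 0 < m i 1 := by fin_cases i <;> simp <;> omega
    rw [pathProfile, mulVec_fin_two_apply]
    exact Nat.add_pos_right _ (Nat.mul_pos hm (ih 1))

lemma pathProfile_strictMono (h01 : m 0 1 ≤ m 1 1) (hdeg : (m *ᵥ 1) 0 < (m *ᵥ 1) 1)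
    (hq : 0 < m 0 1) {k : ℕ} (hk : 0 < k) : StrictMono (pathProfile m k) := by
  obtain ⟨k, rfl⟩ := Nat.exists_eq_add_of_lt hk
  exact strictMono_mulVec h01 hdeg (pathProfile_pos h01 hq _ 0) (pathProfile_monotone h01 hdeg _)

lemma pathProfile_add_le (h01 : m 0 1 ≤ m 1 1) (hdeg : (m *ᵥ 1) 0 < (m *ᵥ 1) 1)
    (i j : ℕ) (l : Fin 2) :
    pathProfile m (i + j) l ≤ pathProfile m i l * pathProfile m j 1 := by
  induction i generalizing l with
  | zero => simpa [pathProfile] using pathProfile_monotone h01 hdeg j (Fin.le_last l)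
  | succ i ih =>
    rw [Nat.succ_add]
    simp only [pathProfile, mulVec, dotProduct, Finset.sum_mul, mul_assoc]
    gcongr with k
    exact ih k

lemma pathProfile_add_lt (h01 : m 0 1 ≤ m 1 1) (hdeg : (m *ᵥ 1) 0 < (m *ᵥ 1) 1)
    (hq : 0 < m 0 1) (hr : 0 < m 1 0) {i j : ℕ} (hi : 0 < i) (hj : 0 < j) :
    pathProfile m (i + j) 1 < pathProfile m i 1 * pathProfile m j 1 := by
  have hj01 := strictMono_fin_two_iff.mp (pathProfile_strictMono h01 hdeg hq hj)
  induction i, hi using Nat.le_induction with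
  | base =>
    rw [add_comm]
    simp only [pathProfile, mulVec_fin_two_apply, Pi.one_apply, mul_one]
    nlinarith [Nat.mul_lt_mul_of_pos_left hj01 hr]
  | succ i hi ih =>
    rw [Nat.succ_add]
    simp only [pathProfile, mulVec_fin_two_apply]
    nlinarith [Nat.mul_le_mul_left (m 1 0) (pathProfile_add_le h01 hdeg i j 0),
      Nat.mul_lt_mul_of_pos_left ih (hq.trans_le h01)]

lemma dotProduct_mul_eq (hz : Monotone z) (v : Fin 2 → ℕ) :
    w ⬝ᵥ (z * v) = z 0 * (w ⬝ᵥ v) + (z 1 - z 0) * (w 1 * v 1) := by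
  obtain ⟨d, hd⟩ := Nat.exists_eq_add_of_le (monotone_fin_two_iff.mp hz)
  simp only [dotProduct, Fin.sum_univ_two, Pi.mul_apply, hd, Nat.add_sub_cancel_left]
  ring

lemma dotProduct_mul_pathProfile_add_le (hbal : ∀ i j, w i * m i j = w j * m j i)
    (h01 : m 0 1 ≤ m 1 1) (hdeg : (m *ᵥ 1) 0 < (m *ᵥ 1) 1) (hz : Monotone z) (i j : ℕ) :
    w ⬝ᵥ (z * pathProfile m (i + j)) ≤ w ⬝ᵥ (z * (pathProfile m i * pathProfile m j)) := by
  rw [dotProduct_mul_eq hz, dotProduct_mul_eq hz, dotProduct_pathProfile_add hbal, Pi.mul_apply]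
  gcongr
  exact pathProfile_add_le h01 hdeg i j 1

lemma dotProduct_mul_pathProfile_add_lt (hbal : ∀ i j, w i * m i j = w j * m j i)
    (h01 : m 0 1 ≤ m 1 1) (hdeg : (m *ᵥ 1) 0 < (m *ᵥ 1) 1) (hq : 0 < m 0 1) (hr : 0 < m 1 0)
    (hw : 0 < w 1) (hz : StrictMono z) {i j : ℕ} (hi : 0 < i) (hj : 0 < j) :
    w ⬝ᵥ (z * pathProfile m (i + j)) < w ⬝ᵥ (z * (pathProfile m i * pathProfile m j)) := by
  have hz01 := strictMono_fin_two_iff.mp hz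
  rw [dotProduct_mul_eq hz.monotone, dotProduct_mul_eq hz.monotone,
    dotProduct_pathProfile_add hbal, Pi.mul_apply]
  gcongr
  · omega
  · exact pathProfile_add_lt h01 hdeg hq hr hi hj

lemma dotProduct_mul_pathProfile_le_join (hbal : ∀ i j, w i * m i j = w j * m j i)
    (h01 : m 0 1 ≤ m 1 1) (hdeg : (m *ᵥ 1) 0 < (m *ᵥ 1) 1) {i j : ℕ} {x y : Fin 2 → ℕ}
    (hx : ∀ z, Monotone z → w ⬝ᵥ (z * pathProfile m i) ≤ w ⬝ᵥ (z * x))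
    (hy : Monotone y) (hyp : ∀ z, Monotone z → w ⬝ᵥ (z * pathProfile m j) ≤ w ⬝ᵥ (z * y))
    (hz : Monotone z) :
    w ⬝ᵥ (z * (pathProfile m i * pathProfile m (j + 1))) ≤ w ⬝ᵥ (z * (x * m *ᵥ y)) := by
  have hzi : Monotone (z * pathProfile m i) := hz.mul' (pathProfile_monotone h01 hdeg i)
  calc w ⬝ᵥ (z * (pathProfile m i * pathProfile m (j + 1)))
      = w ⬝ᵥ (m *ᵥ (z * pathProfile m i) * pathProfile m j) := by
        rw [← mul_assoc, pathProfile, dotProduct_mul_mulVec_comm hbal]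
    _ ≤ w ⬝ᵥ (m *ᵥ (z * pathProfile m i) * y) := hyp _ (monotone_mulVec h01 hdeg hzi)
    _ = w ⬝ᵥ (z * m *ᵥ y * pathProfile m i) := by
        rw [← dotProduct_mul_mulVec_comm hbal, mul_right_comm]
    _ ≤ w ⬝ᵥ (z * m *ᵥ y * x) := hx _ (hz.mul' (monotone_mulVec h01 hdeg hy))
    _ = w ⬝ᵥ (z * (x * m *ᵥ y)) := by rw [mul_assoc, mul_comm (m *ᵥ y)]

theorem IsTreeProfile.dominates (hbal : ∀ i j, w i * m i j = w j * m j i)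
    (h01 : m 0 1 ≤ m 1 1) (hdeg : (m *ᵥ 1) 0 < (m *ᵥ 1) 1) {k : ℕ} {x : Fin 2 → ℕ}
    (h : IsTreeProfile m k x) :
    Monotone x ∧ ∀ z, Monotone z → w ⬝ᵥ (z * pathProfile m k) ≤ w ⬝ᵥ (z * x) := by
  induction h with
  | single => exact ⟨monotone_const, fun _ _ => le_rfl⟩
  | @join i j x y _ _ ihx ihy =>
    refine ⟨ihx.1.mul' (monotone_mulVec h01 hdeg ihy.1), fun z hz => ?_⟩
    exact (dotProduct_mul_pathProfile_add_le hbal h01 hdeg hz i (j + 1)).trans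
      (dotProduct_mul_pathProfile_le_join hbal h01 hdeg ihx.2 ihy.1 ihy.2 hz)

theorem IsBranchedProfile.dotProduct_lt (hbal : ∀ i j, w i * m i j = w j * m j i)
    (h01 : m 0 1 ≤ m 1 1) (hdeg : (m *ᵥ 1) 0 < (m *ᵥ 1) 1) (hq : 0 < m 0 1) (hr : 0 < m 1 0)
    (hw : 0 < w 1) {k : ℕ} {x : Fin 2 → ℕ} (h : IsBranchedProfile m k x) :
    ∀ z, 0 < z 0 → StrictMono z → w ⬝ᵥ (z * pathProfile m k) < w ⬝ᵥ (z * x) := by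
  induction h with
  | @branch i j x y hx hi hy =>
    intro z _ hz
    have hxd := hx.dominates hbal h01 hdeg
    have hyd := hy.dominates hbal h01 hdeg
    exact (dotProduct_mul_pathProfile_add_lt hbal h01 hdeg hq hr hw hz hi j.succ_pos).trans_le
      (dotProduct_mul_pathProfile_le_join hbal h01 hdeg hxd.2 hyd.1 hyd.2 hz.monotone)
  | @extend j y _ ih =>
    intro z hz0 hz
    have hmz0 : 0 < (m *ᵥ z) 0 := by
      rw [mulVec_fin_two_apply]
      exact Nat.add_pos_right _ (Nat.mul_pos hq (hz0.trans (strictMono_fin_two_iff.mp hz)))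
    calc w ⬝ᵥ (z * pathProfile m (j + 1)) = w ⬝ᵥ (m *ᵥ z * pathProfile m j) :=
          dotProduct_mul_mulVec_comm hbal _ _
      _ < w ⬝ᵥ (m *ᵥ z * y) := ih _ hmz0 (strictMono_mulVec h01 hdeg hz0 hz.monotone)
      _ = w ⬝ᵥ (z * m *ᵥ y) := (dotProduct_mul_mulVec_comm hbal _ _).symm

theorem IsBranchedProfile.dotProduct_pathProfile_succ_lt
    (hbal : ∀ i j, w i * m i j = w j * m j i) (h01 : m 0 1 ≤ m 1 1)
    (hdeg : (m *ᵥ 1) 0 < (m *ᵥ 1) 1) (hq : 0 < m 0 1) (hr : 0 < m 1 0) (hw : 0 < w 1)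
    {k : ℕ} {y : Fin 2 → ℕ} (h : IsBranchedProfile m k y) :
    w ⬝ᵥ pathProfile m (k + 1) < w ⬝ᵥ (m *ᵥ y) := by
  have h1 : 0 < (m *ᵥ 1) 0 := by
    rw [mulVec_fin_two_apply]
    exact Nat.add_pos_right _ (by simpa using hq)
  have := h.dotProduct_lt hbal h01 hdeg hq hr hw (m *ᵥ 1) h1 (strictMono_fin_two_iff.mpr hdeg)
  rwa [← dotProduct_mul_mulVec_comm hbal, ← dotProduct_mul_mulVec_comm hbal, one_mul,
    one_mul] at this

end FinTwo

section Colorings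

variable {V VH : Type} {HAdj : VH → VH → Prop}

def IsHColoring (G : SimpleGraph V) (HAdj : VH → VH → Prop) (f : V → VH) : Prop :=
  ∀ u w, G.Adj u w → HAdj (f u) (f w)

noncomputable def rootedHomCount (G : SimpleGraph V) (HAdj : VH → VH → Prop) (rt : V)
    (v : VH) : ℕ :=
  Nat.card {f : V → VH // IsHColoring G HAdj f ∧ f rt = v}

lemma homCount_eq_sum_rootedHomCount [Fintype V] [Fintype VH] (G : SimpleGraph V) (rt : V) :
    homCount G HAdj = ∑ v, rootedHomCount G HAdj rt v :=
  card_subtype_eq_sum_card_fiber (IsHColoring G HAdj) fun f => f rt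

lemma rootedHomCount_of_subsingleton [Subsingleton V] (G : SimpleGraph V) (rt : V) (v : VH) :
    rootedHomCount G HAdj rt v = 1 :=
  Nat.card_eq_one_iff_exists.mpr
    ⟨⟨fun _ => v, fun u w h => absurd (Subsingleton.elim u w) (G.ne_of_adj h), rfl⟩,
      fun f => Subtype.ext <| funext fun u => by rw [Subsingleton.elim u rt]; exact f.2.2⟩

lemma rootedHomCount_eq_mul_of_cut [Std.Symm HAdj] {G : SimpleGraph V} {S : Set V}
    {rt x : V} (hrt : rt ∈ S) (hx : x ∉ S) (hadj : G.Adj rt x)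
    (hcut : ∀ u w, G.Adj u w → u ∈ S → w ∉ S → u = rt ∧ w = x) (v : VH) :
    rootedHomCount G HAdj rt v = rootedHomCount (G.induce S) HAdj ⟨rt, hrt⟩ v *
      Nat.card {h : ↥Sᶜ → VH // IsHColoring (G.induce Sᶜ) HAdj h ∧ HAdj v (h ⟨x, hx⟩)} := by
  classical
  rw [rootedHomCount, rootedHomCount, ← Nat.card_prod]
  refine Nat.card_congr ((Equiv.subtypeEquiv (Equiv.piEquivPiSubtypeProd (· ∈ S) _)
    fun f => ?_).trans Equiv.subtypeProdEquivProd)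
  simp only [Equiv.piEquivPiSubtypeProd_apply]
  constructor
  · rintro ⟨hf, rfl⟩
    exact ⟨⟨fun u w h => hf _ _ h, rfl⟩, fun u w h => hf _ _ h, hf _ _ hadj⟩
  · rintro ⟨⟨hA, rfl⟩, hB, hrx⟩
    refine ⟨fun u w h => ?_, rfl⟩
    by_cases hu : u ∈ S <;> by_cases hw : w ∈ S
    · exact hA ⟨u, hu⟩ ⟨w, hw⟩ h
    · obtain ⟨rfl, rfl⟩ := hcut u w h hu hw
      exact hrx
    · obtain ⟨rfl, rfl⟩ := hcut w u h.symm hw hu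
      exact Std.Symm.symm _ _ hrx
    · exact hB ⟨u, hu⟩ ⟨w, hw⟩ h

lemma isHColoring_pathGraph_iff [Std.Symm HAdj] {n : ℕ} (f : Fin (n + 1) → VH) :
    IsHColoring (pathGraph (n + 1)) HAdj f ↔ ∀ i : Fin n, HAdj (f i.castSucc) (f i.succ) := by
  refine ⟨fun h i => h _ _ (by simp [pathGraph_adj]), fun h u w huw => ?_⟩
  rcases pathGraph_adj.mp huw with e | e
  · obtain ⟨i, rfl, rfl⟩ : ∃ i : Fin n, u = i.castSucc ∧ w = i.succ :=
      ⟨⟨u, by omega⟩, rfl, Fin.ext (by simp [e])⟩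
    exact h i
  · obtain ⟨i, rfl, rfl⟩ : ∃ i : Fin n, w = i.castSucc ∧ u = i.succ :=
      ⟨⟨w, by omega⟩, rfl, Fin.ext (by simp [e])⟩
    exact Std.Symm.symm _ _ (h i)

lemma isHColoring_pathGraph_succ_iff [Std.Symm HAdj] {n : ℕ} (f : Fin (n + 2) → VH) :
    IsHColoring (pathGraph (n + 2)) HAdj f ↔
      HAdj (f 0) (f 1) ∧ IsHColoring (pathGraph (n + 1)) HAdj (Fin.tail f) := by
  rw [isHColoring_pathGraph_iff, isHColoring_pathGraph_iff, Fin.forall_fin_succ]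
  simp only [Fin.tail, Fin.succ_castSucc, Fin.castSucc_zero, Fin.succ_zero_eq_one]

lemma rootedHomCount_pathGraph_succ [Std.Symm HAdj] (n : ℕ) (v : VH) :
    rootedHomCount (pathGraph (n + 2)) HAdj 0 v =
      Nat.card {g : Fin (n + 1) → VH // IsHColoring (pathGraph (n + 1)) HAdj g ∧ HAdj v (g 0)} :=
  Nat.card_congr
    { toFun := fun f => ⟨Fin.tail f.1, by
        have h := (isHColoring_pathGraph_succ_iff f.1).mp f.2.1
        exact ⟨h.2, by simpa [Fin.tail, ← f.2.2] using h.1⟩⟩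
      invFun := fun g => ⟨Fin.cons v g.1, by
        rw [isHColoring_pathGraph_succ_iff]
        exact ⟨⟨g.2.2, g.2.1⟩, rfl⟩⟩
      left_inv := fun f => Subtype.ext (by simp [← f.2.2])
      right_inv := fun g => Subtype.ext (by simp) }

end Colorings

section Equitable

variable {VH ι : Type} [Fintype VH] {HAdj : VH → VH → Prop} {cls : VH → ι}
  {m : Matrix ι ι ℕ}

def IsEquitable (HAdj : VH → VH → Prop) (cls : VH → ι) (m : Matrix ι ι ℕ) : Prop :=
  ∀ v j, Nat.card {w // HAdj v w ∧ cls w = j} = m (cls v) j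

noncomputable def classSize (cls : VH → ι) (j : ι) : ℕ := Nat.card {v // cls v = j}

lemma sum_comp_eq_classSize_dotProduct [Fintype ι] (y : ι → ℕ) :
    ∑ v, y (cls v) = classSize cls ⬝ᵥ y := by
  classical
  rw [← Finset.sum_fiberwise Finset.univ cls]
  refine Finset.sum_congr rfl fun j _ => ?_
  rw [Finset.sum_congr rfl fun v hv => by rw [(Finset.mem_filter.mp hv).2], Finset.sum_const,
    smul_eq_mul, classSize, Nat.card_eq_fintype_card, Fintype.card_subtype]

lemma homCount_eq_classSize_dotProduct [Fintype ι] {V : Type} [Fintype V] (G : SimpleGraph V)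
    (rt : V) {y : ι → ℕ} (hy : ∀ v, rootedHomCount G HAdj rt v = y (cls v)) :
    homCount G HAdj = classSize cls ⬝ᵥ y := by
  rw [homCount_eq_sum_rootedHomCount G rt, Finset.sum_congr rfl fun v _ => hy v,
    sum_comp_eq_classSize_dotProduct]

lemma IsEquitable.card_adj_eq_mulVec [Fintype ι] (h : IsEquitable HAdj cls m) {α : Type*}
    [Finite α] (P : α → Prop) (g : α → VH) {y : ι → ℕ}
    (hy : ∀ w, Nat.card {a // P a ∧ g a = w} = y (cls w)) (v : VH) :
    Nat.card {a // P a ∧ HAdj v (g a)} = (m *ᵥ y) (cls v) := by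
  classical
  have hfiber : ∀ w, Nat.card {a // (P a ∧ HAdj v (g a)) ∧ g a = w} =
      if HAdj v w then y (cls w) else 0 := fun w => by
    split_ifs with hw
    · rw [← hy]
      exact Nat.card_congr (Equiv.subtypeEquivRight fun a =>
        ⟨fun ha => ⟨ha.1.1, ha.2⟩, fun ha => ⟨⟨ha.1, ha.2 ▸ hw⟩, ha.2⟩⟩)
    · exact Nat.card_eq_zero.mpr (Or.inl ⟨fun a => hw (a.2.2 ▸ a.2.1.2)⟩)
  rw [card_subtype_eq_sum_card_fiber _ g, Finset.sum_congr rfl fun w _ => hfiber w,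
    ← Finset.sum_filter, ← Finset.sum_fiberwise _ cls]
  refine Finset.sum_congr rfl fun j _ => ?_
  rw [Finset.sum_congr rfl fun w hw => by rw [(Finset.mem_filter.mp hw).2], Finset.sum_const,
    smul_eq_mul, Finset.filter_filter]
  congr 1
  rw [← Fintype.card_subtype, ← Nat.card_eq_fintype_card]
  exact h v j

lemma IsEquitable.card_adj_eq_mulVec_one [Fintype ι] (h : IsEquitable HAdj cls m) (v : VH) :
    Nat.card {w // HAdj v w} = (m *ᵥ 1) (cls v) := by
  simpa using h.card_adj_eq_mulVec (fun _ => True) id (y := 1) (fun w => by simp) v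

lemma IsEquitable.classSize_mul_comm [Std.Symm HAdj] (h : IsEquitable HAdj cls m) (i j : ι) :
    classSize cls i * m i j = classSize cls j * m j i := by
  classical
  have hcard : ∀ a k, #{b | cls b = k ∧ HAdj a b} = m (cls a) k := fun a k => by
    rw [← h a k, Nat.card_eq_fintype_card, Fintype.card_subtype]
    simp only [and_comm]
  have hsize : ∀ k, #{a | cls a = k} = classSize cls k := fun k => by
    rw [classSize, Nat.card_eq_fintype_card, Fintype.card_subtype]
  have hL : ∀ a ∈ ({a | cls a = i} : Finset VH), #{b | cls b = j ∧ HAdj a b} = m i j :=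
    fun a ha => by rw [hcard, (Finset.mem_filter.mp ha).2]
  have hR : ∀ b ∈ ({b | cls b = j} : Finset VH), #{a | cls a = i ∧ HAdj a b} = m j i :=
    fun b hb => by simp_rw [Std.Symm.iff (r := HAdj) _ b]; rw [hcard, (Finset.mem_filter.mp hb).2]
  have := Finset.sum_card_bipartiteAbove_eq_sum_card_bipartiteBelow
    (s := ({a | cls a = i} : Finset VH)) (t := {b | cls b = j}) (r := HAdj)
  simp only [Finset.bipartiteAbove, Finset.bipartiteBelow, Finset.filter_filter] at this
  rwa [Finset.sum_congr rfl hL, Finset.sum_congr rfl hR, Finset.sum_const, Finset.sum_const,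
    hsize, hsize, smul_eq_mul, smul_eq_mul] at this

end Equitable

lemma isEquitable_of_orbits {VH ι : Type} {HAdj : VH → VH → Prop} {cls : VH → ι}
    (hcls : ∀ u v : VH, cls u = cls v ↔
      ∃ φ : VH ≃ VH, (∀ x y : VH, HAdj x y ↔ HAdj (φ x) (φ y)) ∧ φ u = v)
    {rep : ι → VH} (hrep : ∀ i, cls (rep i) = i) :
    IsEquitable HAdj cls (Matrix.of fun i j => Nat.card {w // HAdj (rep i) w ∧ cls w = j}) := by
  intro v j
  obtain ⟨φ, hφ, hφv⟩ := (hcls (rep (cls v)) v).mp (hrep _)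
  have hφcls : ∀ w, cls (φ w) = cls w := fun w => ((hcls w (φ w)).mpr ⟨φ, hφ, rfl⟩).symm
  refine (Nat.card_congr (Equiv.subtypeEquiv φ fun w => ?_)).symm
  rw [hφ (rep (cls v)) w, hφv, hφcls]

section TreeProfiles

variable {VH ι : Type} [Fintype VH] [Fintype ι] {HAdj : VH → VH → Prop} [Std.Symm HAdj]
  {cls : VH → ι} {m : Matrix ι ι ℕ}

lemma IsEquitable.rootedHomCount_eq_of_cut (h : IsEquitable HAdj cls m) {V : Type} [Finite V]
    {G : SimpleGraph V} {S : Set V} {rt x : V} (hrt : rt ∈ S) (hx : x ∉ S) (hadj : G.Adj rt x)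
    (hcut : ∀ u w, G.Adj u w → u ∈ S → w ∉ S → u = rt ∧ w = x) {y z : ι → ℕ}
    (hy : ∀ v, rootedHomCount (G.induce S) HAdj ⟨rt, hrt⟩ v = y (cls v))
    (hz : ∀ v, rootedHomCount (G.induce Sᶜ) HAdj ⟨x, hx⟩ v = z (cls v)) (v : VH) :
    rootedHomCount G HAdj rt v = (y * m *ᵥ z) (cls v) := by
  rw [rootedHomCount_eq_mul_of_cut hrt hx hadj hcut, hy,
    h.card_adj_eq_mulVec (IsHColoring (G.induce Sᶜ) HAdj) (· ⟨x, hx⟩) hz]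
  rfl

lemma IsEquitable.rootedHomCount_eq_of_leaf (h : IsEquitable HAdj cls m) {V : Type} [Finite V]
    {T : SimpleGraph V} {rt x : V} (hleaf : ∀ y, T.Adj rt y ↔ y = x) (hx : x ∈ ({rt}ᶜ : Set V))
    {z : ι → ℕ} (hz : ∀ v, rootedHomCount (T.induce {rt}ᶜ) HAdj ⟨x, hx⟩ v = z (cls v))
    (v : VH) : rootedHomCount T HAdj rt v = (m *ᵥ z) (cls v) := by
  simpa using h.rootedHomCount_eq_of_cut (Set.mem_singleton rt) hx ((hleaf x).mpr rfl)
    (fun u w huw hu _ => ⟨hu, (hleaf w).mp (hu ▸ huw)⟩) (y := 1)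
    (fun v => rootedHomCount_of_subsingleton _ _ v) hz v

theorem IsEquitable.exists_isTreeProfile (h : IsEquitable HAdj cls m) (n : ℕ) :
    ∀ {V : Type} [Finite V] (T : SimpleGraph V) (rt : V), Nat.card V = n + 1 → T.IsTree →
      ∃ y, IsTreeProfile m n y ∧ ∀ v, rootedHomCount T HAdj rt v = y (cls v) := by
  induction n using Nat.strong_induction_on with
  | _ n ih =>
  intro V _ T rt hcard hT
  rcases Nat.eq_zero_or_pos n with rfl | hn
  · have : Subsingleton V := Finite.card_le_one_iff_subsingleton.mp hcard.le
    exact ⟨1, .single, fun v => rootedHomCount_of_subsingleton T rt v⟩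
  have : Nontrivial V := Finite.one_lt_card_iff_nontrivial.mp (by omega)
  obtain ⟨x, hx⟩ := hT.connected.preconnected.exists_adj_of_nontrivial rt
  obtain ⟨S, hrt, hxS, hTS, hTSc, hcut⟩ := hT.exists_cut hx
  have hsum := card_add_card_compl S
  have : Nonempty S := ⟨⟨rt, hrt⟩⟩
  have : Nonempty ↥Sᶜ := ⟨⟨x, hxS⟩⟩
  have := Nat.card_pos (α := S)
  have := Nat.card_pos (α := ↥Sᶜ)
  obtain ⟨y, hy, hyc⟩ := ih (Nat.card S - 1) (by omega) (T.induce S) ⟨rt, hrt⟩ (by omega) hTS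
  obtain ⟨z, hz, hzc⟩ :=
    ih (Nat.card ↥Sᶜ - 1) (by omega) (T.induce Sᶜ) ⟨x, hxS⟩ (by omega) hTSc
  refine ⟨y * m *ᵥ z, ?_, h.rootedHomCount_eq_of_cut hrt hxS hx hcut hyc hzc⟩
  convert hy.join hz using 1
  omega

theorem IsEquitable.exists_isBranchedProfile (h : IsEquitable HAdj cls m) (n : ℕ) :
    ∀ {V : Type} [Finite V] (T : SimpleGraph V) (rt : V), Nat.card V = n + 1 → T.IsTree →
      ¬ T.IsPathFrom rt →
      ∃ y, IsBranchedProfile m n y ∧ ∀ v, rootedHomCount T HAdj rt v = y (cls v) := by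
  induction n using Nat.strong_induction_on with
  | _ n ih =>
  intro V _ T rt hcard hT hpath
  rcases Nat.eq_zero_or_pos n with rfl | hn
  · have : Subsingleton V := Finite.card_le_one_iff_subsingleton.mp hcard.le
    exact absurd (isPathFrom_of_subsingleton T rt) hpath
  have : Nontrivial V := Finite.one_lt_card_iff_nontrivial.mp (by omega)
  obtain ⟨x, hx⟩ := hT.connected.preconnected.exists_adj_of_nontrivial rt
  by_cases hleaf : ∀ y, T.Adj rt y → y = x
  · have hleaf : ∀ y, T.Adj rt y ↔ y = x := fun y => ⟨hleaf y, fun e => e ▸ hx⟩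
    have hxc : x ∈ ({rt}ᶜ : Set V) := hx.ne.symm
    have hsum := card_add_card_compl ({rt} : Set V)
    rw [Nat.card_unique] at hsum
    obtain ⟨z, hz, hzc⟩ := ih (n - 1) (by omega) (T.induce {rt}ᶜ) ⟨x, hxc⟩ (by omega)
      (hT.isTree_induce_compl_singleton hleaf)
      fun hp => hpath (hp.of_induce_compl_singleton hleaf hxc)
    refine ⟨m *ᵥ z, ?_, h.rootedHomCount_eq_of_leaf hleaf hxc hzc⟩
    convert hz.extend using 1
    omega
  · push Not at hleaf
    obtain ⟨y, hy, hyx⟩ := hleaf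
    obtain ⟨S, hrt, hxS, hTS, hTSc, hcut⟩ := hT.exists_cut hx
    have hyS : y ∈ S := by_contra fun hyS => hyx (hcut rt y hy hrt hyS).2
    have hsum := card_add_card_compl S
    have : Nontrivial S := ⟨⟨rt, hrt⟩, ⟨y, hyS⟩, fun e => hy.ne (congrArg Subtype.val e)⟩
    have : Nonempty ↥Sᶜ := ⟨⟨x, hxS⟩⟩
    have := Finite.one_lt_card (α := S)
    have := Nat.card_pos (α := ↥Sᶜ)
    obtain ⟨yA, hA, hAc⟩ :=
      h.exists_isTreeProfile (Nat.card S - 1) (T.induce S) ⟨rt, hrt⟩ (by omega) hTS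
    obtain ⟨yB, hB, hBc⟩ :=
      h.exists_isTreeProfile (Nat.card ↥Sᶜ - 1) (T.induce Sᶜ) ⟨x, hxS⟩ (by omega) hTSc
    refine ⟨yA * m *ᵥ yB, ?_, h.rootedHomCount_eq_of_cut hrt hxS hx hcut hAc hBc⟩
    convert IsBranchedProfile.branch hA (by omega) hB using 1
    omega

lemma IsEquitable.rootedHomCount_pathGraph (h : IsEquitable HAdj cls m) (n : ℕ) (v : VH) :
    rootedHomCount (pathGraph (n + 1)) HAdj 0 v = pathProfile m n (cls v) := by
  induction n generalizing v with
  | zero => exact rootedHomCount_of_subsingleton (V := Fin 1) _ _ _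
  | succ n ih =>
    rw [rootedHomCount_pathGraph_succ,
      h.card_adj_eq_mulVec (IsHColoring (pathGraph (n + 1)) HAdj) (· 0) ih]
    rfl

end TreeProfiles

section TwoClasses

variable {VH : Type} [Fintype VH] {HAdj : VH → VH → Prop} [Std.Symm HAdj] {cls : VH → Fin 2}
  {m : Matrix (Fin 2) (Fin 2) ℕ}

theorem IsEquitable.homCount_pathGraph_le (h : IsEquitable HAdj cls m) (h01 : m 0 1 ≤ m 1 1)
    (hdeg : (m *ᵥ 1) 0 < (m *ᵥ 1) 1) {V : Type} [Fintype V] {n : ℕ}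
    (hV : Fintype.card V = n + 1) {T : SimpleGraph V} (hT : T.IsTree) :
    homCount (pathGraph (n + 1)) HAdj ≤ homCount T HAdj := by
  obtain ⟨rt⟩ : Nonempty V := Fintype.card_pos_iff.mp (by omega)
  obtain ⟨y, hy, hyc⟩ :=
    h.exists_isTreeProfile n T rt (by rw [Nat.card_eq_fintype_card, hV]) hT
  rw [homCount_eq_classSize_dotProduct _ 0 (h.rootedHomCount_pathGraph n),
    homCount_eq_classSize_dotProduct T rt hyc]
  simpa using (hy.dominates h.classSize_mul_comm h01 hdeg).2 1 monotone_const

theorem IsEquitable.homCount_pathGraph_lt (h : IsEquitable HAdj cls m) (h01 : m 0 1 ≤ m 1 1)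
    (hdeg : (m *ᵥ 1) 0 < (m *ᵥ 1) 1) (hq : 0 < m 0 1) (hr : 0 < m 1 0)
    (hw : 0 < classSize cls 1) {V : Type} [Fintype V] {n : ℕ} (hV : Fintype.card V = n + 1)
    {T : SimpleGraph V} (hT : T.IsTree) (hpath : ¬ Nonempty (T ≃g pathGraph (n + 1))) :
    homCount (pathGraph (n + 1)) HAdj < homCount T HAdj := by
  classical
  obtain _ | n := n
  · have : Subsingleton V := Fintype.card_le_one_iff_subsingleton.mp hV.le
    obtain ⟨rt⟩ : Nonempty V := Fintype.card_pos_iff.mp (by omega)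
    exact absurd (hV ▸ (isPathFrom_of_subsingleton T rt).nonempty_iso) hpath
  have : Nontrivial V := Fintype.one_lt_card_iff_nontrivial.mp (by omega)
  obtain ⟨rt, hrt⟩ := hT.exists_vert_degree_one_of_nontrivial
  obtain ⟨x, hx, hxu⟩ := degree_eq_one_iff_existsUnique_adj.mp hrt
  have hleaf : ∀ y, T.Adj rt y ↔ y = x := fun y => ⟨hxu y, fun e => e ▸ hx⟩
  have hxc : x ∈ ({rt}ᶜ : Set V) := hx.ne.symm
  have hsum := card_add_card_compl ({rt} : Set V)
  rw [Nat.card_unique, Nat.card_eq_fintype_card (α := V), hV] at hsum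
  obtain ⟨z, hz, hzc⟩ := h.exists_isBranchedProfile n (T.induce {rt}ᶜ) ⟨x, hxc⟩ (by omega)
    (hT.isTree_induce_compl_singleton hleaf)
    fun hp => hpath (hV ▸ (hp.of_induce_compl_singleton hleaf hxc).nonempty_iso)
  rw [homCount_eq_classSize_dotProduct _ 0 (h.rootedHomCount_pathGraph _),
    homCount_eq_classSize_dotProduct T rt (h.rootedHomCount_eq_of_leaf hleaf hxc hzc)]
  exact hz.dotProduct_pathProfile_succ_lt h.classSize_mul_comm h01 hdeg hq hr hw

lemma IsEquitable.pos_of_adj_of_adj (h : IsEquitable HAdj cls m)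
    (hsize : ∀ i, 0 < classSize cls i) {x u v : VH} (hxu : HAdj x u) (hxv : HAdj x v)
    (hu : cls u = 0) (hv : cls v = 1) : 0 < m 0 1 ∧ 0 < m 1 0 := by
  have hpos : ∀ w j, HAdj x w → cls w = j → 0 < m (cls x) j := fun w j hw hj => by
    rw [← h x j]
    have : Nonempty {w // HAdj x w ∧ cls w = j} := ⟨⟨w, hw, hj⟩⟩
    exact Nat.card_pos
  have hbal := h.classSize_mul_comm 0 1
  generalize cls x = c at hpos
  fin_cases c
  · have hq := hpos v 1 hxv hv
    refine ⟨hq, Nat.pos_of_ne_zero fun h0 => ?_⟩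
    rw [h0, mul_zero] at hbal
    exact (Nat.mul_pos (hsize 0) hq).ne' hbal
  · have hr := hpos u 0 hxu hu
    refine ⟨Nat.pos_of_ne_zero fun h0 => ?_, hr⟩
    rw [h0, mul_zero] at hbal
    exact (Nat.mul_pos (hsize 1) hr).ne' hbal.symm

end TwoClasses

end HoffmanLondon

theorem two_auto_classes_general
    {VH : Type} [Fintype VH]
    (HAdj : VH → VH → Prop) (hsymm : Symmetric HAdj)
    (cls : VH → Fin 2) (hsurj : Function.Surjective cls)
    (hcls : ∀ u v : VH, cls u = cls v ↔
      ∃ φ : VH ≃ VH, (∀ x y : VH, HAdj x y ↔ HAdj (φ x) (φ y)) ∧ φ u = v)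
    (hdeg : ∀ u v : VH, cls u = 0 → cls v = 1 →
      Nat.card {w : VH // HAdj u w} < Nat.card {w : VH // HAdj v w})
    (hm : ∀ u v : VH, cls u = 0 → cls v = 1 →
      Nat.card {w : VH // HAdj u w ∧ cls w = 1} ≤
        Nat.card {w : VH // HAdj v w ∧ cls w = 1}) :
    (∀ n : ℕ, 1 ≤ n → ∀ T : SimpleGraph (Fin n), T.IsTree →
      homCount (SimpleGraph.pathGraph n) HAdj ≤ homCount T HAdj) ∧
    ((∃ x u v : VH, HAdj x u ∧ HAdj x v ∧ cls u = 0 ∧ cls v = 1) →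
      ∀ n : ℕ, 1 ≤ n → ∀ T : SimpleGraph (Fin n), T.IsTree →
        ¬ Nonempty (T ≃g SimpleGraph.pathGraph n) →
        homCount (SimpleGraph.pathGraph n) HAdj < homCount T HAdj) := by
  have : Std.Symm HAdj := ⟨fun _ _ h => hsymm h⟩
  have hrep : ∀ i, cls (Function.surjInv hsurj i) = i := Function.surjInv_eq hsurj
  have h := HoffmanLondon.isEquitable_of_orbits hcls hrep
  have h01 := hm _ _ (hrep 0) (hrep 1)
  have hdeg' := hdeg _ _ (hrep 0) (hrep 1)
  rw [h.card_adj_eq_mulVec_one, h.card_adj_eq_mulVec_one, hrep, hrep] at hdeg'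
  have hsize : ∀ i, 0 < HoffmanLondon.classSize cls i := fun i =>
    have : Nonempty {v // cls v = i} := ⟨⟨_, hrep i⟩⟩
    Nat.card_pos
  refine ⟨fun n hn T hT => ?_, fun ⟨x, u, v, hxu, hxv, hu, hv⟩ n hn T hT hpath => ?_⟩
  · obtain ⟨n, rfl⟩ : ∃ k, n = k + 1 := ⟨n - 1, by omega⟩
    exact h.homCount_pathGraph_le h01 hdeg' (Fintype.card_fin _) hT
  · obtain ⟨n, rfl⟩ : ∃ k, n = k + 1 := ⟨n - 1, by omega⟩
    obtain ⟨hq, hr⟩ := h.pos_of_adj_of_adj hsize hxu hxv hu hv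
    exact h.homCount_pathGraph_lt h01 hdeg' hq hr (hsize 1) (Fintype.card_fin _) hT hpath

/-- **Corollary (two automorphic similarity classes).** Let `H` be a non-regular target
graph with exactly two automorphic similarity classes `H^1` (indexed `0`) and `H^2`
(indexed `1`), ordered so that the common degree of the vertices of `H^1` is smaller than
that of the vertices of `H^2` (loops counting once). If `m_{1,2} ≤ m_{2,2}`, then `H` is
Hoffman-London; if moreover some vertex of `H` has a neighbor in `H^1` and a neighbor in
`H^2`, then `H` is strongly Hoffman-London. -/
theorem two_auto_classes
    {VH : Type} [Fintype VH]
    (HAdj : VH → VH → Prop) (hsymm : Symmetric HAdj)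
    (cls : VH → Fin 2) (hsurj : Function.Surjective cls)
    (hcls : ∀ u v : VH, cls u = cls v ↔
      ∃ φ : VH ≃ VH, (∀ x y : VH, HAdj x y ↔ HAdj (φ x) (φ y)) ∧ φ u = v)
    (hnotreg : ¬ ∀ u v : VH,
      Nat.card {w : VH // HAdj u w} = Nat.card {w : VH // HAdj v w})
    (hdeg : ∀ u v : VH, cls u = 0 → cls v = 1 →
      Nat.card {w : VH // HAdj u w} < Nat.card {w : VH // HAdj v w})
    (hm : ∀ u v : VH, cls u = 0 → cls v = 1 →
      Nat.card {w : VH // HAdj u w ∧ cls w = 1} ≤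
        Nat.card {w : VH // HAdj v w ∧ cls w = 1}) :
    (∀ n : ℕ, 1 ≤ n → ∀ T : SimpleGraph (Fin n), T.IsTree →
      homCount (SimpleGraph.pathGraph n) HAdj ≤ homCount T HAdj) ∧
    ((∃ x u v : VH, HAdj x u ∧ HAdj x v ∧ cls u = 0 ∧ cls v = 1) →
      ∀ n : ℕ, 1 ≤ n → ∀ T : SimpleGraph (Fin n), T.IsTree →
        ¬ Nonempty (T ≃g SimpleGraph.pathGraph n) →
        homCount (SimpleGraph.pathGraph n) HAdj < homCount T HAdj) :=
  two_auto_classes_general HAdj hsymm cls hsurj hcls hdeg hm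
end

section
/- For every n ≥ 1, the fully looped path P_n^∘ (the path on vertices u_1, …, u_n with edges u_i u_{i+1} for 1 ≤ i ≤ n−1 and a loop at every vertex) is Hoffman-London, and for every n ≥ 3 it is strongly Hoffman-London. -/
/-- The adjacency relation of the fully looped path `P_n^∘`: consecutive vertices are
adjacent, and every vertex has a loop. -/
def loopedPathAdj (n : ℕ) : Fin n → Fin n → Prop :=
  fun i j => i = j ∨ (SimpleGraph.pathGraph n).Adj i j

namespace LoopedPath

open Finset

variable {n : ℕ}

section Operator

/-- The adjacency operator of the looped path on `{0, …, n - 1}`, acting on vectors indexed by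
`ℕ`; its values vanish from `n` on. -/
def adjOp (n : ℕ) : (ℕ → ℕ) →+ (ℕ → ℕ) where
  toFun v k :=
    if k < n then (if 0 < k then v (k - 1) else 0) + v k + (if k + 1 < n then v (k + 1) else 0)
    else 0
  map_zero' := by funext k; simp
  map_add' u v := by funext k; simp only [Pi.add_apply]; split_ifs <;> omega

def dot (n : ℕ) (u v : ℕ → ℕ) : ℕ := ∑ k ∈ range n, u k * v k

lemma adjOp_apply (v : ℕ → ℕ) (k : ℕ) : adjOp n v k =
    if k < n then (if 0 < k then v (k - 1) else 0) + v k + (if k + 1 < n then v (k + 1) else 0)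
    else 0 := rfl

lemma le_adjOp_apply (v : ℕ → ℕ) {k : ℕ} (hk : k < n) : v k ≤ adjOp n v k := by
  rw [adjOp_apply, if_pos hk]; omega

lemma le_adjOp_iterate_apply (m : ℕ) (v : ℕ → ℕ) {k : ℕ} (hk : k < n) :
    v k ≤ (adjOp n)^[m] v k := by
  induction m with
  | zero => rfl
  | succ m ih => rw [Function.iterate_succ_apply']; exact ih.trans (le_adjOp_apply _ hk)

lemma adjOp_mono : Monotone (adjOp n) := fun u v h k => by
  simp only [adjOp_apply]; split_ifs <;> first | rfl | (gcongr <;> exact h _)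

lemma dot_comm (u v : ℕ → ℕ) : dot n u v = dot n v u := by
  simp only [dot, mul_comm]

lemma dot_add_left (u v x : ℕ → ℕ) : dot n (u + v) x = dot n u x + dot n v x := by
  simp only [dot, Pi.add_apply, add_mul, sum_add_distrib]

lemma dot_add_right (u x y : ℕ → ℕ) : dot n u (x + y) = dot n u x + dot n u y := by
  simp only [dot, Pi.add_apply, mul_add, sum_add_distrib]

lemma dot_mul_left (u v x : ℕ → ℕ) : dot n (u * v) x = dot n u (v * x) := by
  simp only [dot, Pi.mul_apply, mul_assoc]

lemma dot_mono_right (u : ℕ → ℕ) : Monotone (dot n u) := fun _ _ h =>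
  sum_le_sum fun k _ => Nat.mul_le_mul_left _ (h k)

lemma sum_range_prev_eq_next {M : Type*} [AddCommMonoid M] (f : ℕ → ℕ → M) :
    ∑ k ∈ range n, (if 0 < k then f (k - 1) k else 0) =
      ∑ k ∈ range n, (if k + 1 < n then f k (k + 1) else 0) := by
  cases n with
  | zero => simp
  | succ m =>
    rw [sum_range_succ', sum_range_succ]
    simp +contextual [sum_ite_of_true, mem_range]

lemma dot_adjOp (u v : ℕ → ℕ) : dot n (adjOp n u) v = dot n u (adjOp n v) := by
  have hL : ∀ k ∈ range n, adjOp n u k * v k = (if 0 < k then u (k - 1) * v k else 0) +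
      u k * v k + (if k + 1 < n then u (k + 1) * v k else 0) := fun k hk => by
    rw [adjOp_apply, if_pos (mem_range.1 hk)]; split_ifs <;> ring
  have hR : ∀ k ∈ range n, u k * adjOp n v k = (if 0 < k then u k * v (k - 1) else 0) +
      u k * v k + (if k + 1 < n then u k * v (k + 1) else 0) := fun k hk => by
    rw [adjOp_apply, if_pos (mem_range.1 hk)]; split_ifs <;> ring
  have h1 := sum_range_prev_eq_next (n := n) fun i k => u i * v k
  have h2 := sum_range_prev_eq_next (n := n) fun i k => u k * v i
  simp only [dot, sum_congr rfl hL, sum_congr rfl hR, sum_add_distrib]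
  omega

lemma dot_adjOp_iterate (m : ℕ) (u v : ℕ → ℕ) :
    dot n ((adjOp n)^[m] u) v = dot n u ((adjOp n)^[m] v) := by
  induction m generalizing v with
  | zero => rfl
  | succ m ih => rw [Function.iterate_succ_apply', dot_adjOp, ih, Function.iterate_succ_apply]

end Operator

section CentralCone

def centralInd (n j : ℕ) : ℕ → ℕ := fun k => if j ≤ k ∧ k + j + 1 ≤ n then 1 else 0

def centralSum (n j : ℕ) (v : ℕ → ℕ) : ℕ := dot n (centralInd n j) v

def centralCone (n : ℕ) : AddSubmonoid (ℕ → ℕ) := AddSubmonoid.closure (Set.range (centralInd n))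

lemma centralInd_mul (i j : ℕ) : centralInd n i * centralInd n j = centralInd n (max i j) := by
  funext k; simp only [Pi.mul_apply, centralInd]; split_ifs <;> omega

lemma centralInd_zero_apply {k : ℕ} (hk : k < n) : centralInd n 0 k = 1 := by
  simp [centralInd]; omega

lemma centralInd_zero_mul_adjOp (u : ℕ → ℕ) : centralInd n 0 * adjOp n u = adjOp n u := by
  funext k
  rw [Pi.mul_apply]
  by_cases hk : k < n
  · rw [centralInd_zero_apply hk, one_mul]
  · rw [adjOp_apply, if_neg hk, mul_zero]

lemma adjOp_centralInd (j : ℕ) : adjOp n (centralInd n j) =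
    if 2 * j + 2 ≤ n then centralInd n (j - 1) + centralInd n j + centralInd n (j + 1)
    else if 2 * j + 1 = n then centralInd n (j - 1) else 0 := by
  funext k
  by_cases h1 : 2 * j + 2 ≤ n <;> by_cases h2 : 2 * j + 1 = n <;>
    simp only [h1, h2, if_true, if_false, Pi.add_apply, Pi.zero_apply, adjOp_apply, centralInd] <;>
    split_ifs <;> omega

lemma centralSum_zero (x : ℕ → ℕ) : centralSum n 0 x = ∑ k ∈ range n, x k := by
  unfold centralSum dot
  exact sum_congr rfl fun k hk => by rw [centralInd_zero_apply (mem_range.1 hk), one_mul]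

lemma centralSum_zero_mul (u x : ℕ → ℕ) : centralSum n 0 (u * x) = dot n u x := by
  rw [centralSum_zero]; rfl

lemma centralSum_centralInd_mul (i j : ℕ) (x : ℕ → ℕ) :
    centralSum n j (centralInd n i * x) = centralSum n (max j i) x := by
  rw [centralSum, ← dot_mul_left, centralInd_mul]; rfl

lemma centralSum_zero_adjOp (hn : 2 ≤ n) (x : ℕ → ℕ) :
    centralSum n 0 (adjOp n x) = 2 * centralSum n 0 x + centralSum n 1 x := by
  rw [centralSum, ← dot_adjOp, adjOp_centralInd, if_pos (by omega)]
  simp only [dot_add_left, centralSum]; ring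

lemma centralInd_mem_centralCone (j : ℕ) : centralInd n j ∈ centralCone n :=
  AddSubmonoid.subset_closure ⟨j, rfl⟩

lemma adjOp_mem_centralCone {v : ℕ → ℕ} (hv : v ∈ centralCone n) : adjOp n v ∈ centralCone n := by
  induction hv using AddSubmonoid.closure_induction with
  | mem v hv =>
    obtain ⟨j, rfl⟩ := hv
    rw [adjOp_centralInd]
    split_ifs
    · exact add_mem (add_mem (centralInd_mem_centralCone _) (centralInd_mem_centralCone _))
        (centralInd_mem_centralCone _)
    · exact centralInd_mem_centralCone _
    · exact zero_mem _
  | zero => rw [map_zero]; exact zero_mem _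
  | add u v _ _ hu hv => rw [map_add]; exact add_mem hu hv

lemma mul_mem_centralCone {u v : ℕ → ℕ} (hu : u ∈ centralCone n) (hv : v ∈ centralCone n) :
    u * v ∈ centralCone n := by
  have h := AddSubmonoid.mul_mem_mul hu hv
  rw [centralCone, AddSubmonoid.closure_mul_closure] at h
  refine AddSubmonoid.closure_mono ?_ h
  rintro _ ⟨_, ⟨i, rfl⟩, _, ⟨j, rfl⟩, rfl⟩
  exact ⟨max i j, (centralInd_mul i j).symm⟩

lemma apply_zero_le_of_mem_centralCone {v : ℕ → ℕ} (hv : v ∈ centralCone n) {k : ℕ}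
    (hk : k < n) : v 0 ≤ v k := by
  induction hv using AddSubmonoid.closure_induction with
  | mem v hv => obtain ⟨j, rfl⟩ := hv; simp only [centralInd]; split_ifs <;> omega
  | zero => rfl
  | add u v _ _ hu hv => exact Nat.add_le_add hu hv

lemma apply_sub_one_of_mem_centralCone {v : ℕ → ℕ} (hv : v ∈ centralCone n) :
    v (n - 1) = v 0 := by
  induction hv using AddSubmonoid.closure_induction with
  | mem v hv => obtain ⟨j, rfl⟩ := hv; simp only [centralInd]; split_ifs <;> omega
  | zero => rfl
  | add u v _ _ hu hv => simp only [Pi.add_apply, hu, hv]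

lemma centralSum_zero_of_mem_centralCone (hn : 2 ≤ n) {x : ℕ → ℕ} (hx : x ∈ centralCone n) :
    centralSum n 0 x = centralSum n 1 x + 2 * x 0 := by
  have hind : centralInd n 0 = centralInd n 1 + Pi.single 0 1 + Pi.single (n - 1) 1 := by
    funext k
    simp only [centralInd, Pi.add_apply, Pi.single_apply]
    split_ifs <;> omega
  have hsingle (i : ℕ) (hi : i < n) : dot n (Pi.single i 1) x = x i := by
    rw [dot, sum_eq_single i (fun k _ hk => by simp [hk]) (by simp [hi])]; simp
  rw [centralSum, hind, dot_add_left, dot_add_left, hsingle 0 (by omega),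
    hsingle (n - 1) (by omega), apply_sub_one_of_mem_centralCone hx, centralSum]
  ring

end CentralCone

section CentralOrder

def CentralLE (n : ℕ) (x y : ℕ → ℕ) : Prop := ∀ j, centralSum n j x ≤ centralSum n j y

/-- Central domination that is strict on one of the two outermost intervals: from these, one
application of `adjOp` moves strictness onto the full interval. -/
def CentralLT (n : ℕ) (x y : ℕ → ℕ) : Prop :=
  CentralLE n x y ∧ (centralSum n 0 x < centralSum n 0 y ∨ centralSum n 1 x < centralSum n 1 y)

lemma CentralLE.refl (x : ℕ → ℕ) : CentralLE n x x := fun _ => le_rfl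

lemma CentralLE.trans {x y z : ℕ → ℕ} (hxy : CentralLE n x y) (hyz : CentralLE n y z) :
    CentralLE n x z := fun j => (hxy j).trans (hyz j)

lemma centralSum_mul_add_le {m x y : ℕ → ℕ} (hm : m ∈ centralCone n) (h : CentralLE n x y)
    (j : ℕ) : centralSum n j (m * x) + m 0 * centralSum n j y ≤
      centralSum n j (m * y) + m 0 * centralSum n j x := by
  induction hm using AddSubmonoid.closure_induction with
  | mem m hm =>
    obtain ⟨i, rfl⟩ := hm
    rw [centralSum_centralInd_mul, centralSum_centralInd_mul]
    by_cases hi : i = 0 ∧ 0 < n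
    · rw [hi.1, max_eq_left (Nat.zero_le j), centralInd_zero_apply hi.2, one_mul, one_mul,
        add_comm]
    · have : centralInd n i 0 = 0 := by simp only [centralInd]; split_ifs <;> omega
      simpa [this] using h (max j i)
  | zero => simp [centralSum, dot]
  | add u v _ _ hu hv =>
    simp only [add_mul, Pi.add_apply, centralSum, dot_add_right] at hu hv ⊢
    linarith

lemma CentralLE.mul_left {m x y : ℕ → ℕ} (hm : m ∈ centralCone n) (h : CentralLE n x y) :
    CentralLE n (m * x) (m * y) := fun j => by
  have := centralSum_mul_add_le hm h j
  have := Nat.mul_le_mul_left (m 0) (h j)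
  omega

lemma centralSum_mul_lt {m x y : ℕ → ℕ} (hm : m ∈ centralCone n) (hm0 : 0 < m 0)
    (h : CentralLE n x y) {j : ℕ} (hj : centralSum n j x < centralSum n j y) :
    centralSum n j (m * x) < centralSum n j (m * y) := by
  have := centralSum_mul_add_le hm h j
  have := Nat.mul_lt_mul_of_pos_left hj hm0
  omega

lemma CentralLE.dot_le {v x y : ℕ → ℕ} (hv : v ∈ centralCone n) (h : CentralLE n x y) :
    dot n v x ≤ dot n v y := by
  simpa only [centralSum_zero_mul] using h.mul_left hv 0

lemma CentralLE.adjOp {x y : ℕ → ℕ} (h : CentralLE n x y) :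
    CentralLE n (adjOp n x) (adjOp n y) := fun j => by
  simpa only [centralSum, ← dot_adjOp] using
    h.dot_le (adjOp_mem_centralCone (centralInd_mem_centralCone j))

lemma CentralLT.of_centralSum_lt {x y : ℕ → ℕ} (h : CentralLE n x y) {j : ℕ} (hj : j ≤ 1)
    (hlt : centralSum n j x < centralSum n j y) : CentralLT n x y := by
  interval_cases j
  exacts [⟨h, .inl hlt⟩, ⟨h, .inr hlt⟩]

lemma CentralLT.centralSum_zero_adjOp_lt (hn : 2 ≤ n) {x y : ℕ → ℕ} (h : CentralLT n x y) :
    centralSum n 0 (adjOp n x) < centralSum n 0 (adjOp n y) := by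
  rw [centralSum_zero_adjOp hn, centralSum_zero_adjOp hn]
  have := h.1 0; have := h.1 1
  rcases h.2 with h' | h' <;> omega

end CentralOrder

section PathVec

/-- `pathVec n m k` counts the colourings of the path on `m + 1` vertices with an end coloured
`k`. -/
def pathVec (n m : ℕ) : ℕ → ℕ := (adjOp n)^[m] (centralInd n 0)

lemma pathVec_succ (m : ℕ) : pathVec n (m + 1) = adjOp n (pathVec n m) :=
  Function.iterate_succ_apply' _ _ _

lemma pathVec_add (a b : ℕ) : pathVec n (a + b) = (adjOp n)^[a] (pathVec n b) :=
  Function.iterate_add_apply _ _ _ _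

lemma pathVec_mem_centralCone (m : ℕ) : pathVec n m ∈ centralCone n := by
  induction m with
  | zero => exact centralInd_mem_centralCone 0
  | succ m ih => rw [pathVec_succ]; exact adjOp_mem_centralCone ih

lemma one_le_pathVec (m : ℕ) {k : ℕ} (hk : k < n) : 1 ≤ pathVec n m k :=
  (centralInd_zero_apply hk).symm.le.trans (le_adjOp_iterate_apply m _ hk)

lemma pathVec_zero_lt_one (hn : 3 ≤ n) {m : ℕ} (hm : 0 < m) : pathVec n m 0 < pathVec n m 1 := by
  obtain ⟨m, rfl⟩ : ∃ m', m = m' + 1 := ⟨m - 1, by omega⟩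
  have := one_le_pathVec (n := n) m (k := 2) (by omega)
  simp [pathVec_succ, adjOp_apply, show 0 < n by omega, show 1 < n by omega, show 2 < n by omega]
  omega

lemma centralSum_adjOp_iterate_le (a p q : ℕ) :
    centralSum n p ((adjOp n)^[a] (centralInd n q)) ≤ centralSum n p (pathVec n a) :=
  dot_mono_right _ <| (adjOp_mono.iterate a) fun k => by
    simp only [centralInd]; split_ifs <;> omega

lemma centralLE_pathVec_mul (a b : ℕ) :
    CentralLE n (pathVec n (a + b)) (pathVec n a * pathVec n b) := by
  intro j
  have hsplit : CentralLE n ((adjOp n)^[a] (centralInd n j)) (centralInd n j * pathVec n a) := by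
    intro i
    rw [centralSum_centralInd_mul]
    rcases le_or_gt j i with hji | hij
    · rw [max_eq_left hji]; exact centralSum_adjOp_iterate_le a i j
    · rw [max_eq_right hij.le, centralSum, ← dot_adjOp_iterate, dot_comm]
      exact centralSum_adjOp_iterate_le a j i
  calc centralSum n j (pathVec n (a + b))
      = dot n (pathVec n b) ((adjOp n)^[a] (centralInd n j)) := by
        rw [centralSum, pathVec_add, ← dot_adjOp_iterate, dot_comm]
    _ ≤ dot n (pathVec n b) (centralInd n j * pathVec n a) :=
        hsplit.dot_le (pathVec_mem_centralCone b)
    _ = centralSum n j (pathVec n a * pathVec n b) := by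
        rw [dot_comm, dot_mul_left, centralSum]

lemma pathVec_apply_zero_mul_lt (hn : 3 ≤ n) {a b : ℕ} (ha : 0 < a) (hb : 0 < b) :
    pathVec n a 0 * pathVec n b 0 < pathVec n (a + b) 0 := by
  set c := pathVec n b 0
  have hle : c • centralInd n 0 + Pi.single 1 1 ≤ pathVec n b := fun k => by
    have h01 := pathVec_zero_lt_one hn hb
    have h0k := apply_zero_le_of_mem_centralCone (pathVec_mem_centralCone (n := n) b) (k := k)
    simp only [Pi.add_apply, Pi.smul_apply, smul_eq_mul, Pi.single_apply, centralInd]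
    split_ifs <;> subst_vars <;> omega
  have hδ : 1 ≤ (adjOp n)^[a] (Pi.single 1 1) 0 := by
    obtain ⟨a, rfl⟩ : ∃ a', a = a' + 1 := ⟨a - 1, by omega⟩
    rw [Function.iterate_succ_apply]
    refine le_trans ?_ (le_adjOp_iterate_apply a _ (by omega))
    simp [adjOp_apply, show 0 < n by omega, show 1 < n by omega]
  have := ((adjOp_mono (n := n)).iterate a) hle 0
  rw [iterate_map_add, iterate_map_nsmul, ← pathVec_add] at this
  simp only [Pi.add_apply, Pi.smul_apply, smul_eq_mul] at this
  change c * pathVec n a 0 + _ ≤ _ at this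
  rw [mul_comm]; omega

/-- Both sides have the same total mass, and the product is smaller at the two ends. -/
lemma centralSum_one_pathVec_lt (hn : 3 ≤ n) {a b : ℕ} (ha : 0 < a) (hb : 0 < b) :
    centralSum n 1 (pathVec n (a + b)) < centralSum n 1 (pathVec n a * pathVec n b) := by
  have hsum : centralSum n 0 (pathVec n (a + b)) = centralSum n 0 (pathVec n a * pathVec n b) := by
    rw [centralSum_zero_mul, centralSum, pathVec_add, ← dot_adjOp_iterate]; rfl
  rw [centralSum_zero_of_mem_centralCone (by omega) (pathVec_mem_centralCone _),
    centralSum_zero_of_mem_centralCone (by omega)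
      (mul_mem_centralCone (pathVec_mem_centralCone a) (pathVec_mem_centralCone b)),
    Pi.mul_apply] at hsum
  have := pathVec_apply_zero_mul_lt hn ha hb
  omega

end PathVec

section Absorb

variable {u v : ℕ → ℕ} {a b : ℕ}

lemma centralLE_pathVec_mul_succ_mul_adjOp (hu : u ∈ centralCone n)
    (hau : CentralLE n (pathVec n a) u) (hbv : CentralLE n (pathVec n b) v) :
    CentralLE n (pathVec n a * pathVec n (b + 1)) (u * adjOp n v) := by
  have h1 := hau.mul_left (pathVec_mem_centralCone (b + 1))
  rw [mul_comm, mul_comm (pathVec n (b + 1))] at h1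
  rw [pathVec_succ] at h1 ⊢
  exact h1.trans (hbv.adjOp.mul_left hu)

lemma centralLE_pathVec_mul_adjOp (hu : u ∈ centralCone n)
    (hau : CentralLE n (pathVec n a) u) (hbv : CentralLE n (pathVec n b) v) :
    CentralLE n (pathVec n (a + b + 1)) (u * adjOp n v) :=
  (centralLE_pathVec_mul a (b + 1)).trans (centralLE_pathVec_mul_succ_mul_adjOp hu hau hbv)

lemma centralSum_pathVec_lt_mul_adjOp_of_left (hn : 0 < n) (hu : u ∈ centralCone n)
    (hau : CentralLE n (pathVec n a) u) (hbv : CentralLE n (pathVec n b) v) {j : ℕ}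
    (hj : centralSum n j (pathVec n a) < centralSum n j u) :
    centralSum n j (pathVec n (a + b + 1)) < centralSum n j (u * adjOp n v) := by
  have h1 := centralSum_mul_lt (pathVec_mem_centralCone (b + 1)) (one_le_pathVec _ hn) hau hj
  rw [mul_comm, mul_comm (pathVec n (b + 1)), pathVec_succ] at h1
  calc centralSum n j (pathVec n (a + b + 1))
      ≤ centralSum n j (pathVec n a * pathVec n (b + 1)) := centralLE_pathVec_mul a (b + 1) j
    _ < centralSum n j (u * adjOp n v) := by
      rw [pathVec_succ]; exact h1.trans_le (hbv.adjOp.mul_left hu j)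

lemma centralSum_pathVec_lt_mul_adjOp_of_right (hn : 2 ≤ n) (hu : u ∈ centralCone n)
    (hu0 : 0 < u 0) (hau : CentralLE n (pathVec n a) u) (hbv : CentralLT n (pathVec n b) v) :
    centralSum n 0 (pathVec n (a + b + 1)) < centralSum n 0 (u * adjOp n v) := by
  have h1 := hau.mul_left (pathVec_mem_centralCone (b + 1)) 0
  rw [mul_comm, mul_comm (pathVec n (b + 1)), pathVec_succ] at h1
  calc centralSum n 0 (pathVec n (a + b + 1))
      ≤ centralSum n 0 (pathVec n a * pathVec n (b + 1)) := centralLE_pathVec_mul a (b + 1) 0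
    _ < centralSum n 0 (u * adjOp n v) := by
      rw [pathVec_succ]
      exact h1.trans_lt (centralSum_mul_lt hu hu0 hbv.1.adjOp (hbv.centralSum_zero_adjOp_lt hn))

lemma centralLT_pathVec_mul_adjOp (hn : 3 ≤ n) (ha : 0 < a) (hu : u ∈ centralCone n)
    (hau : CentralLE n (pathVec n a) u) (hbv : CentralLE n (pathVec n b) v) :
    CentralLT n (pathVec n (a + b + 1)) (u * adjOp n v) :=
  .of_centralSum_lt (centralLE_pathVec_mul_adjOp hu hau hbv) le_rfl <|
    (centralSum_one_pathVec_lt hn ha b.succ_pos).trans_le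
      (centralLE_pathVec_mul_succ_mul_adjOp hu hau hbv 1)

end Absorb

section Elimination

variable (n : ℕ) (par : ℕ → ℕ)

/-- Absorb vertex `t + 1` into its parent. Parents come before their children, so once the
vertices after `t + 1` are absorbed, `t + 1` is a leaf. -/
def absorbLast (t : ℕ) (w : ℕ → ℕ → ℕ) : ℕ → ℕ → ℕ :=
  Function.update w (par (t + 1)) (w (par (t + 1)) * adjOp n (w (t + 1)))

def absorbLastExp (t : ℕ) (s : ℕ → ℕ) : ℕ → ℕ :=
  Function.update s (par (t + 1)) (s (par (t + 1)) + s (t + 1) + 1)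

def rootVec : ℕ → (ℕ → ℕ → ℕ) → ℕ → ℕ
  | 0, w => w 0
  | t + 1, w => rootVec t (absorbLast n par t w)

def DominatesPathVec (t : ℕ) (w : ℕ → ℕ → ℕ) (s : ℕ → ℕ) : Prop :=
  ∀ i ≤ t, w i ∈ centralCone n ∧ CentralLE n (pathVec n (s i)) (w i)

def childCount (t z : ℕ) : ℕ := ((Icc 1 t).filter (par · = z)).card

/-- Some vertex is strictly ahead of its path vector (a non-root one may be so on the second
central interval only), or some non-root vertex will still merge two nontrivial branches. -/
def ForcesStrict (t : ℕ) (w : ℕ → ℕ → ℕ) (s : ℕ → ℕ) : Prop :=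
  ∃ z ≤ t, centralSum n 0 (pathVec n (s z)) < centralSum n 0 (w z) ∨
    0 < z ∧ (centralSum n 1 (pathVec n (s z)) < centralSum n 1 (w z) ∨
      2 ≤ childCount par t z + min (s z) 1)

variable {n par} {t : ℕ} {w : ℕ → ℕ → ℕ} {s : ℕ → ℕ}

lemma absorbLast_self :
    absorbLast n par t w (par (t + 1)) = w (par (t + 1)) * adjOp n (w (t + 1)) :=
  Function.update_self ..

lemma absorbLast_of_ne {z : ℕ} (hz : z ≠ par (t + 1)) : absorbLast n par t w z = w z :=
  Function.update_of_ne hz ..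

lemma absorbLastExp_self : absorbLastExp par t s (par (t + 1)) = s (par (t + 1)) + s (t + 1) + 1 :=
  Function.update_self ..

lemma absorbLastExp_of_ne {z : ℕ} (hz : z ≠ par (t + 1)) : absorbLastExp par t s z = s z :=
  Function.update_of_ne hz ..

lemma add_sum_absorbLastExp (hP : par (t + 1) ≤ t) :
    t + ∑ i ∈ range (t + 1), absorbLastExp par t s i = t + 1 + ∑ i ∈ range (t + 2), s i := by
  have hmem : par (t + 1) ∈ range (t + 1) := mem_range.2 (by omega)
  rw [absorbLastExp, sum_update_of_mem hmem, sum_range_succ _ (t + 1),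
    sum_eq_add_sum_sdiff_singleton_of_mem hmem]
  ring

lemma rootVec_pred (u : ℕ → ℕ) (hw : ∀ i < t, w i = centralInd n 0) (ht : w t = u) :
    rootVec n (· - 1) t w = (adjOp n)^[t] u := by
  induction t generalizing w u with
  | zero => exact ht
  | succ t ih =>
    rw [rootVec, Function.iterate_succ_apply]
    refine ih _ (fun i hi => ?_) ?_
    · rw [absorbLast_of_ne (by omega), hw i (by omega)]
    · have hself := absorbLast_self (n := n) (par := (· - 1)) (t := t) (w := w)
      simp only [Nat.add_sub_cancel] at hself
      rw [hself, hw t t.lt_succ_self, ht, centralInd_zero_mul_adjOp]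

lemma DominatesPathVec.absorb (h : DominatesPathVec n (t + 1) w s) (hP : par (t + 1) ≤ t) :
    DominatesPathVec n t (absorbLast n par t w) (absorbLastExp par t s) := by
  intro i hi
  by_cases hiP : i = par (t + 1)
  · subst hiP
    rw [absorbLast_self, absorbLastExp_self]
    obtain ⟨huc, hu⟩ := h (par (t + 1)) (by omega)
    obtain ⟨hvc, hv⟩ := h (t + 1) le_rfl
    exact ⟨mul_mem_centralCone huc (adjOp_mem_centralCone hvc),
      centralLE_pathVec_mul_adjOp huc hu hv⟩
  · rw [absorbLast_of_ne hiP, absorbLastExp_of_ne hiP]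
    exact h i (Nat.le_succ_of_le hi)

theorem centralLE_rootVec (hpar : ∀ i, 0 < i → i ≤ t → par i < i)
    (h : DominatesPathVec n t w s) :
    CentralLE n (pathVec n (t + ∑ i ∈ range (t + 1), s i)) (rootVec n par t w) := by
  induction t generalizing w s with
  | zero => simpa [rootVec] using (h 0 le_rfl).2
  | succ t ih =>
    have hP : par (t + 1) ≤ t := Nat.lt_succ_iff.1 (hpar _ t.succ_pos le_rfl)
    rw [← add_sum_absorbLastExp hP]
    exact ih (fun i hi hit => hpar i hi (by omega)) (h.absorb hP)

lemma childCount_succ_self :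
    childCount par (t + 1) (par (t + 1)) = childCount par t (par (t + 1)) + 1 := by
  rw [childCount, childCount, ← insert_Icc_right_eq_Icc_add_one (by omega), filter_insert,
    if_pos rfl, card_insert_of_notMem (by simp)]

lemma childCount_succ_of_ne {z : ℕ} (hz : z ≠ par (t + 1)) :
    childCount par (t + 1) z = childCount par t z := by
  rw [childCount, childCount, ← insert_Icc_right_eq_Icc_add_one (by omega), filter_insert,
    if_neg (Ne.symm hz)]

lemma childCount_succ_succ (hpar : ∀ i, 0 < i → i ≤ t + 1 → par i < i) :
    childCount par (t + 1) (t + 1) = 0 := by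
  rw [childCount, card_eq_zero, filter_eq_empty_iff]
  intro i hi h
  have := hpar i (by simp at hi; omega) (by simp at hi; omega)
  simp at hi; omega

lemma absorbLast_apply_zero_pos (hn : 0 < n) (hpos : ∀ i ≤ t + 1, 0 < w i 0) :
    ∀ i ≤ t, 0 < absorbLast n par t w i 0 := by
  intro i hi
  by_cases hiP : i = par (t + 1)
  · subst hiP
    rw [absorbLast_self, Pi.mul_apply]
    exact Nat.mul_pos (hpos _ (by omega)) ((hpos _ le_rfl).trans_le (le_adjOp_apply _ hn))
  · rw [absorbLast_of_ne hiP]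
    exact hpos i (by omega)

lemma ForcesStrict.absorb (hn : 3 ≤ n) (hpar : ∀ i, 0 < i → i ≤ t + 1 → par i < i)
    (h : DominatesPathVec n (t + 1) w s) (hpos : ∀ i ≤ t + 1, 0 < w i 0)
    (hf : ForcesStrict n par (t + 1) w s) :
    ForcesStrict n par t (absorbLast n par t w) (absorbLastExp par t s) := by
  set P := par (t + 1) with hPdef
  have hP : P ≤ t := Nat.lt_succ_iff.1 (hpar _ t.succ_pos le_rfl)
  obtain ⟨huc, hu⟩ := h P (by omega)
  obtain ⟨-, hv⟩ := h (t + 1) le_rfl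
  have hstrict (hlt : centralSum n 0 (pathVec n (s P + s (t + 1) + 1)) <
        centralSum n 0 (w P * adjOp n (w (t + 1))) ∨
      0 < P ∧ centralSum n 1 (pathVec n (s P + s (t + 1) + 1)) <
        centralSum n 1 (w P * adjOp n (w (t + 1)))) :
      ForcesStrict n par t (absorbLast n par t w) (absorbLastExp par t s) :=
    ⟨P, hP, by rw [absorbLast_self, absorbLastExp_self]; tauto⟩
  have hleft (j : ℕ) :=
    centralSum_pathVec_lt_mul_adjOp_of_left (j := j) (show 0 < n by omega) huc hu hv
  obtain ⟨z, hzt, hz⟩ := hf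
  rcases hzt.lt_or_eq with hzt | rfl
  · by_cases hzP : z = P
    · subst hzP
      rcases hz with h0 | ⟨hP0, h1 | hkids⟩
      · exact hstrict (.inl (hleft 0 h0))
      · exact hstrict (.inr ⟨hP0, hleft 1 h1⟩)
      · rw [childCount_succ_self, ← hPdef] at hkids
        rcases Nat.eq_zero_or_pos (childCount par t P) with h0 | h0
        · exact hstrict <| ((centralLT_pathVec_mul_adjOp hn (by omega) huc hu hv).2).imp_right
            fun h1 => ⟨hP0, h1⟩
        · exact ⟨P, hP, .inr ⟨hP0, .inr (by rw [absorbLastExp_self]; omega)⟩⟩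
    · exact ⟨z, by omega, by
        rwa [absorbLast_of_ne hzP, absorbLastExp_of_ne hzP, ← childCount_succ_of_ne hzP]⟩
  · refine hstrict (.inl (centralSum_pathVec_lt_mul_adjOp_of_right (by omega) huc
      (hpos P (by omega)) hu ⟨hv, ?_⟩))
    rcases hz with h0 | ⟨-, h1 | hkids⟩
    · exact .inl h0
    · exact .inr h1
    · rw [childCount_succ_succ hpar] at hkids; omega

theorem centralSum_zero_pathVec_lt_rootVec (hn : 3 ≤ n)
    (hpar : ∀ i, 0 < i → i ≤ t → par i < i) (h : DominatesPathVec n t w s)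
    (hpos : ∀ i ≤ t, 0 < w i 0) (hf : ForcesStrict n par t w s) :
    centralSum n 0 (pathVec n (t + ∑ i ∈ range (t + 1), s i)) <
      centralSum n 0 (rootVec n par t w) := by
  induction t generalizing w s with
  | zero =>
    obtain ⟨z, hz, hroot | ⟨hz0, -⟩⟩ := hf
    · obtain rfl : z = 0 := by omega
      simpa [rootVec] using hroot
    · omega
  | succ t ih =>
    have hP : par (t + 1) ≤ t := Nat.lt_succ_iff.1 (hpar _ t.succ_pos le_rfl)
    rw [← add_sum_absorbLastExp hP]
    exact ih (fun i hi hit => hpar i hi (by omega)) (h.absorb hP)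
      (absorbLast_apply_zero_pos (by omega) hpos) (hf.absorb hn hpar h hpos)

end Elimination

section Counting

abbrev LoopedAdj (x y : ℕ) : Prop := x ≤ y + 1 ∧ y ≤ x + 1

/-- The colour of vertex `k` under a colouring of the vertices `0, …, t - 1`, with the junk value
`0` for `k ≥ t`. -/
def valAt {t : ℕ} (c : Fin t → Fin n) (k : ℕ) : ℕ := if h : k < t then c ⟨k, h⟩ else 0

def vertexWeight {t : ℕ} (par : ℕ → ℕ) (w : ℕ → ℕ → ℕ) (c : Fin t → Fin n) (i : Fin t) : ℕ :=
  if (i : ℕ) = 0 ∨ LoopedAdj (valAt c (par i)) (c i) then w i (c i) else 0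

def weightedCount (n t : ℕ) (par : ℕ → ℕ) (w : ℕ → ℕ → ℕ) : ℕ :=
  ∑ c : Fin t → Fin n, ∏ i, vertexWeight par w c i

lemma valAt_of_lt {t : ℕ} (c : Fin t → Fin n) {k : ℕ} (hk : k < t) : valAt c k = c ⟨k, hk⟩ :=
  dif_pos hk

lemma valAt_snoc {t : ℕ} (c : Fin (t + 1) → Fin n) (y : Fin n) {k : ℕ} (hk : k < t + 1) :
    valAt (Fin.snoc c y : Fin (t + 2) → Fin n) k = valAt c k := by
  rw [valAt_of_lt _ hk, valAt_of_lt _ (by omega)]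
  exact congrArg Fin.val (Fin.snoc_castSucc (α := fun _ => Fin n) (i := ⟨k, hk⟩) y c)

lemma sum_loopedAdj (v : ℕ → ℕ) {x : ℕ} (hx : x < n) :
    ∑ y : Fin n, (if LoopedAdj x y then v y else 0) = adjOp n v x := by
  have hsplit (y : ℕ) : (if LoopedAdj x y then v y else 0) = (if y + 1 = x then v y else 0) +
      (if y = x then v y else 0) + (if y = x + 1 then v y else 0) := by
    simp only [LoopedAdj]; split_ifs <;> omega
  have hprev : ∑ y ∈ range n, (if y + 1 = x then v y else 0) = if 0 < x then v (x - 1) else 0 := by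
    cases x with
    | zero => simp
    | succ x => simp [show x < n by omega]
  rw [Fin.sum_univ_eq_sum_range (fun y => if LoopedAdj x y then v y else 0)]
  simp only [hsplit, sum_add_distrib, hprev, sum_ite_eq', mem_range, adjOp_apply, if_pos hx]

variable {par : ℕ → ℕ} {t : ℕ} {w : ℕ → ℕ → ℕ}

lemma weightedCount_one : weightedCount n 1 par w = ∑ k ∈ range n, w 0 k := by
  rw [weightedCount, ← (Equiv.funUnique (Fin 1) (Fin n)).symm.sum_comp,
    ← Fin.sum_univ_eq_sum_range]
  simp [vertexWeight]

lemma vertexWeight_snoc_castSucc (hpar : ∀ i, 0 < i → i ≤ t + 1 → par i < i)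
    (c : Fin (t + 1) → Fin n) (y : Fin n) (i : Fin (t + 1)) :
    vertexWeight par w (Fin.snoc c y : Fin (t + 2) → Fin n) i.castSucc =
      vertexWeight par w c i := by
  simp only [vertexWeight, Fin.val_castSucc, Fin.snoc_castSucc]
  rcases Nat.eq_zero_or_pos i with hi | hi
  · simp [hi]
  · rw [valAt_snoc c y ((hpar i hi (by omega)).trans i.2)]

lemma vertexWeight_snoc_last (hpar : ∀ i, 0 < i → i ≤ t + 1 → par i < i)
    (c : Fin (t + 1) → Fin n) (y : Fin n) :
    vertexWeight par w (Fin.snoc c y : Fin (t + 2) → Fin n) (Fin.last (t + 1)) =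
      if LoopedAdj (valAt c (par (t + 1))) y then w (t + 1) y else 0 := by
  simp only [vertexWeight, Fin.val_last, Fin.snoc_last, add_eq_zero, one_ne_zero, and_false,
    false_or]
  rw [valAt_snoc c y (hpar _ t.succ_pos le_rfl)]

lemma vertexWeight_absorbLast (c : Fin (t + 1) → Fin n) (i : Fin (t + 1)) :
    vertexWeight par (absorbLast n par t w) c i = vertexWeight par w c i *
      if (i : ℕ) = par (t + 1) then adjOp n (w (t + 1)) (c i) else 1 := by
  unfold vertexWeight absorbLast
  split_ifs with h1 h2 <;> simp_all [Function.update_of_ne]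

/-- Summing out the colour of the last vertex, a leaf, is one absorption. -/
lemma weightedCount_succ (hpar : ∀ i, 0 < i → i ≤ t + 1 → par i < i) :
    weightedCount n (t + 2) par w = weightedCount n (t + 1) par (absorbLast n par t w) := by
  have hP : par (t + 1) < t + 1 := hpar _ t.succ_pos le_rfl
  rw [weightedCount, ← (Fin.snocEquiv fun _ => Fin n).sum_comp, Fintype.sum_prod_type, sum_comm]
  refine sum_congr rfl fun c _ => ?_
  have hval : valAt c (par (t + 1)) < n := valAt_of_lt c hP ▸ (c _).2
  calc ∑ y : Fin n, ∏ i, vertexWeight par w ((Fin.snocEquiv fun _ => Fin n) (y, c)) i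
      = ∑ y : Fin n, (∏ i, vertexWeight par w c i) *
          if LoopedAdj (valAt c (par (t + 1))) y then w (t + 1) y else 0 := by
        refine sum_congr rfl fun y _ => ?_
        rw [Fin.prod_univ_castSucc]
        exact congrArg₂ _ (prod_congr rfl fun i _ => vertexWeight_snoc_castSucc hpar c y i)
          (vertexWeight_snoc_last hpar c y)
    _ = (∏ i, vertexWeight par w c i) * adjOp n (w (t + 1)) (valAt c (par (t + 1))) := by
        rw [← mul_sum, sum_loopedAdj _ hval]
    _ = ∏ i, vertexWeight par (absorbLast n par t w) c i := by
        rw [prod_congr rfl fun i _ => vertexWeight_absorbLast c i, prod_mul_distrib,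
          prod_eq_single ⟨_, hP⟩ (fun i _ hi => if_neg fun h => hi (Fin.ext h)) (by simp),
          if_pos rfl, valAt_of_lt c hP]

theorem weightedCount_eq_rootVec (hpar : ∀ i, 0 < i → i ≤ t → par i < i) :
    weightedCount n (t + 1) par w = centralSum n 0 (rootVec n par t w) := by
  induction t generalizing w with
  | zero => rw [weightedCount_one, centralSum_zero, rootVec]
  | succ t ih =>
    rw [weightedCount_succ hpar, ih fun i hi hit => hpar i hi (by omega), rootVec]

end Counting

section ParentMaps

variable {t : ℕ}

/-- A numbering of the rooted tree `T` in which the root is `0` and parents come first. -/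
structure IsParentMap (T : SimpleGraph (Fin t)) (par : ℕ → ℕ) : Prop where
  lt : ∀ i, 0 < i → i < t → par i < i
  adj_iff : ∀ u v : Fin t,
    T.Adj u v ↔ (0 < (v : ℕ) ∧ (u : ℕ) = par v) ∨ (0 < (u : ℕ) ∧ (v : ℕ) = par u)

lemma loopedPathAdj_iff {i j : Fin n} : loopedPathAdj n i j ↔ LoopedAdj i j := by
  rw [loopedPathAdj, SimpleGraph.pathGraph_adj, Fin.ext_iff]; omega

lemma IsParentMap.homCount_eq {T : SimpleGraph (Fin t)} {par : ℕ → ℕ} (h : IsParentMap T par) :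
    homCount T (loopedPathAdj n) = weightedCount n t par (fun _ => centralInd n 0) := by
  classical
  have hiff (c : Fin t → Fin n) : (∀ u v, T.Adj u v → loopedPathAdj n (c u) (c v)) ↔
      ∀ i : Fin t, (i : ℕ) = 0 ∨ LoopedAdj (valAt c (par i)) (c i) := by
    simp only [loopedPathAdj_iff]
    constructor
    · intro hc i
      refine or_iff_not_imp_left.2 fun hi => ?_
      have hpi := h.lt i (by omega) i.2
      rw [valAt_of_lt c (hpi.trans i.2)]
      exact hc _ _ ((h.adj_iff _ _).2 (.inl ⟨by omega, rfl⟩))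
    · intro hc u v huv
      rcases (h.adj_iff u v).1 huv with ⟨hv, hu⟩ | ⟨hu, hv⟩
      · simpa [hv.ne', ← hu, valAt_of_lt] using hc v
      · have := (hc u).resolve_left hu.ne'
        rw [← hv, valAt_of_lt c v.2] at this
        exact ⟨this.2, this.1⟩
  rw [homCount, Nat.card_eq_fintype_card, Fintype.card_subtype, card_filter, weightedCount]
  refine sum_congr rfl fun c _ => ?_
  simp only [vertexWeight, centralInd_zero_apply (c _).2, prod_boole, mem_univ, true_implies]
  exact if_congr (hiff c) rfl rfl

lemma IsParentMap.homCount_eq_centralSum {m : ℕ} {T : SimpleGraph (Fin (m + 1))} {par : ℕ → ℕ}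
    (h : IsParentMap T par) :
    homCount T (loopedPathAdj n) = centralSum n 0 (rootVec n par m fun _ => centralInd n 0) := by
  rw [h.homCount_eq, weightedCount_eq_rootVec fun i hi him => h.lt i hi (by omega)]

lemma isParentMap_pathGraph : IsParentMap (SimpleGraph.pathGraph t) (· - 1) where
  lt _ hi _ := Nat.sub_lt hi one_pos
  adj_iff u v := by rw [SimpleGraph.pathGraph_adj]; omega

lemma homCount_pathGraph (m : ℕ) :
    homCount (SimpleGraph.pathGraph (m + 1)) (loopedPathAdj n) = centralSum n 0 (pathVec n m) := by
  rw [isParentMap_pathGraph.homCount_eq_centralSum, rootVec_pred _ (fun _ _ => rfl) rfl, pathVec]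

lemma IsParentMap.eq_pathGraph {T : SimpleGraph (Fin t)} {par : ℕ → ℕ} (h : IsParentMap T par)
    (hpred : ∀ i, 0 < i → i < t → par i = i - 1) : T = SimpleGraph.pathGraph t := by
  ext u v
  have hu := hpred u; have hv := hpred v
  rw [h.adj_iff, isParentMap_pathGraph.adj_iff]
  omega

lemma homCount_congr {V V' W : Type} [Fintype V] [Fintype V'] [Fintype W] {G : SimpleGraph V}
    {G' : SimpleGraph V'} (φ : G ≃g G') (HAdj : W → W → Prop) :
    homCount G HAdj = homCount G' HAdj :=
  Nat.card_congr
    { toFun f := ⟨f.1 ∘ φ.symm, fun u v huv => f.2 _ _ (φ.symm.map_adj_iff.2 huv)⟩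
      invFun f := ⟨f.1 ∘ φ, fun u v huv => f.2 _ _ (φ.map_adj_iff.2 huv)⟩
      left_inv f := by ext u; simp
      right_inv f := by ext u; simp }

/-- The parent edges are `t - 1` distinct edges, and a tree on `t` vertices has no others. -/
lemma _root_.SimpleGraph.IsTree.isParentMap {T : SimpleGraph (Fin t)} (hT : T.IsTree)
    {par : ℕ → ℕ} (hlt : ∀ i, 0 < i → i < t → par i < i)
    (hadj : ∀ u v : Fin t, 0 < (v : ℕ) → (u : ℕ) = par v → T.Adj u v) : IsParentMap T par := by
  classical
  refine ⟨hlt, fun u v => ⟨fun huv => ?_, ?_⟩⟩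
  · have ht : 0 < t := Fin.pos u
    have hS (x : Fin t) : x ∈ univ.erase ⟨0, ht⟩ ↔ 0 < (x : ℕ) := by
      simp [Fin.ext_iff, Nat.pos_iff_ne_zero]
    have hpar (x : Fin t) (hx : x ∈ univ.erase ⟨0, ht⟩) : par x < t :=
      (hlt x ((hS x).1 hx) x.2).trans x.2
    obtain ⟨x, hx, hux⟩ := surj_on_of_inj_on_of_card_le (s := univ.erase ⟨0, ht⟩)
      (t := T.edgeFinset) (fun (x : Fin t) hx => (s(⟨par x, hpar x hx⟩, x) : Sym2 (Fin t)))
      (fun x hx => SimpleGraph.mem_edgeFinset.2 (hadj _ _ ((hS x).1 hx) rfl))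
      (fun (a b : Fin t) ha hb hab => by
        have := hlt a ((hS a).1 ha) a.2; have := hlt b ((hS b).1 hb) b.2
        simp only [Sym2.eq_iff, Fin.ext_iff] at hab
        omega)
      (by have := hT.card_edgeFinset; simp at this ⊢; omega)
      s(u, v) (SimpleGraph.mem_edgeFinset.2 huv)
    have hx0 := (hS x).1 hx
    rcases Sym2.eq_iff.1 hux with ⟨rfl, rfl⟩ | ⟨rfl, rfl⟩
    · exact .inl ⟨hx0, rfl⟩
    · exact .inr ⟨hx0, rfl⟩
  · rintro (⟨hv, hu⟩ | ⟨hu, hv⟩)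
    · exact hadj u v hv hu
    · exact (hadj v u hu hv).symm

lemma _root_.SimpleGraph.Connected.exists_adj_dist_lt {V : Type*} {G : SimpleGraph V}
    (hG : G.Connected) {r v : V} (hv : v ≠ r) : ∃ u, G.Adj u v ∧ G.dist r u < G.dist r v := by
  obtain ⟨p, hp⟩ := hG.exists_walk_length_eq_dist v r
  cases p with
  | nil => exact absurd rfl hv
  | cons h q =>
    refine ⟨_, h.symm, ?_⟩
    rw [SimpleGraph.dist_comm, SimpleGraph.dist_comm (u := r), ← hp, SimpleGraph.Walk.length_cons]
    exact Nat.lt_succ_of_le (SimpleGraph.dist_le q)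

/-- Relabel the vertices in order of their distance from `r`: then `r` becomes `0`, and every
other vertex has a neighbour closer to `r`, hence with a smaller label, to serve as its parent. -/
theorem _root_.SimpleGraph.IsTree.exists_isParentMap {T : SimpleGraph (Fin t)} (hT : T.IsTree)
    (r : Fin t) : ∃ (T' : SimpleGraph (Fin t)) (par : ℕ → ℕ) (φ : T ≃g T'),
      IsParentMap T' par ∧ (φ r : ℕ) = 0 := by
  set σ := Tuple.sort fun v => T.dist r v
  have hmono : Monotone fun i => T.dist r (σ i) := Tuple.monotone_sort fun v => T.dist r v
  have ht : 0 < t := Fin.pos r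
  have hσ0 : σ ⟨0, ht⟩ = r := by
    have := hmono (show (⟨0, ht⟩ : Fin t) ≤ σ.symm r from Nat.zero_le _)
    simp only [Equiv.apply_symm_apply, SimpleGraph.dist_self, nonpos_iff_eq_zero] at this
    exact ((hT.connected.dist_eq_zero_iff).1 this).symm
  have hparent (i : Fin t) (hi : 0 < (i : ℕ)) : ∃ j : Fin t, j < i ∧ T.Adj (σ j) (σ i) := by
    have hne : σ i ≠ r := fun h => hi.ne' (congrArg Fin.val (σ.injective (h.trans hσ0.symm)))
    obtain ⟨u, hu, hdist⟩ := hT.connected.exists_adj_dist_lt hne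
    refine ⟨σ.symm u, lt_of_not_ge fun hle => ?_, by rwa [Equiv.apply_symm_apply]⟩
    have := hmono hle
    simp only [Equiv.apply_symm_apply] at this
    omega
  choose p hp using hparent
  let par (k : ℕ) : ℕ := if h : 0 < k ∧ k < t then p ⟨k, h.2⟩ h.1 else 0
  have hpar (v : Fin t) (hv : 0 < (v : ℕ)) : par v = p v hv := by
    simp only [par, dif_pos (And.intro hv v.2)]
  refine ⟨T.comap σ, par, (SimpleGraph.Iso.comap σ T).symm, ?_, ?_⟩
  · refine ((SimpleGraph.Iso.comap σ T).isTree_iff.2 hT).isParentMap (fun i hi hit => ?_)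
      (fun u v hv hu => ?_)
    · rw [hpar ⟨i, hit⟩ hi]; exact (hp _ hi).1
    · rw [hpar v hv, ← Fin.ext_iff] at hu
      exact hu ▸ (hp v hv).2
  · simp [SimpleGraph.Iso.comap, ← hσ0]

lemma IsParentMap.childCount_zero_le_one {m : ℕ} {T : SimpleGraph (Fin (m + 1))} {par : ℕ → ℕ}
    [Fintype (T.neighborSet 0)] (h : IsParentMap T par) (hdeg : T.degree 0 = 1) :
    childCount par m 0 ≤ 1 := by
  obtain ⟨x, -, hx⟩ := SimpleGraph.degree_eq_one_iff_existsUnique_adj.1 hdeg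
  refine card_le_one.2 fun a ha b hb => ?_
  simp only [mem_filter, mem_Icc] at ha hb
  have hchild (c : ℕ) (hc : 1 ≤ c ∧ c ≤ m) (hpc : par c = 0) : (⟨c, by omega⟩ : Fin (m + 1)) = x :=
    hx _ ((h.adj_iff _ _).2 (.inl ⟨by simp; omega, by simp [hpc]⟩))
  exact congrArg Fin.val ((hchild a ha.1 ha.2).trans (hchild b hb.1 hb.2).symm)

lemma pred_eq_of_childCount_le_one {m : ℕ} {par : ℕ → ℕ}
    (hlt : ∀ i, 0 < i → i ≤ m → par i < i) (hc : ∀ z ≤ m, childCount par m z ≤ 1) :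
    ∀ i, 0 < i → i ≤ m → par i = i - 1 := by
  intro i
  induction i using Nat.strong_induction_on with
  | _ i ih =>
    intro hi him
    by_contra hne
    have hpi := hlt i hi him
    have hsib := ih (par i + 1) (by omega) (by omega) (by omega)
    have := card_le_one.1 (hc (par i) (by omega)) (par i + 1) (by simp; omega) i (by simp; omega)
    omega

lemma IsParentMap.exists_two_le_childCount {m : ℕ} {T : SimpleGraph (Fin (m + 1))}
    {par : ℕ → ℕ} [Fintype (T.neighborSet 0)] (h : IsParentMap T par) (hdeg : T.degree 0 = 1)
    (hT : T ≠ SimpleGraph.pathGraph (m + 1)) : ∃ z, 0 < z ∧ z ≤ m ∧ 2 ≤ childCount par m z := by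
  by_contra! hno
  have hc (z : ℕ) (hz : z ≤ m) : childCount par m z ≤ 1 := by
    rcases Nat.eq_zero_or_pos z with rfl | hz0
    · exact h.childCount_zero_le_one hdeg
    · exact Nat.lt_succ_iff.1 (hno z hz0 hz)
  have hpred := pred_eq_of_childCount_le_one (fun i hi him => h.lt i hi (by omega)) hc
  exact hT (h.eq_pathGraph fun i hi hit => hpred i hi (by omega))

end ParentMaps

lemma dominatesPathVec_centralInd_zero (m : ℕ) :
    DominatesPathVec n m (fun _ => centralInd n 0) 0 :=
  fun _ _ => ⟨centralInd_mem_centralCone 0, CentralLE.refl _⟩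

theorem homCount_pathGraph_le_of_isTree {t : ℕ} {T : SimpleGraph (Fin t)} (hT : T.IsTree) :
    homCount (SimpleGraph.pathGraph t) (loopedPathAdj n) ≤ homCount T (loopedPathAdj n) := by
  obtain ⟨m, rfl⟩ : ∃ m, t = m + 1 := ⟨t - 1, by have := hT.connected.nonempty.some.2; omega⟩
  obtain ⟨T', par, φ, hpm, -⟩ := hT.exists_isParentMap 0
  rw [homCount_congr φ _, hpm.homCount_eq_centralSum, homCount_pathGraph]
  simpa using centralLE_rootVec (fun i hi him => hpm.lt i hi (by omega))
    (dominatesPathVec_centralInd_zero m) 0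

theorem homCount_pathGraph_lt_of_isTree (hn : 3 ≤ n) {t : ℕ} {T : SimpleGraph (Fin t)}
    (hT : T.IsTree) (hiso : ¬ Nonempty (T ≃g SimpleGraph.pathGraph t)) :
    homCount (SimpleGraph.pathGraph t) (loopedPathAdj n) < homCount T (loopedPathAdj n) := by
  classical
  obtain ⟨m, rfl⟩ : ∃ m, t = m + 1 := ⟨t - 1, by have := hT.connected.nonempty.some.2; omega⟩
  rcases Nat.eq_zero_or_pos m with rfl | hm
  · have : T = SimpleGraph.pathGraph 1 := by
      ext a b
      obtain rfl := Subsingleton.elim (α := Fin 1) a b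
      simp
    exact absurd ⟨this ▸ .refl⟩ hiso
  have : Nontrivial (Fin (m + 1)) := Fin.nontrivial_iff_two_le.2 (by omega)
  obtain ⟨r, hr⟩ := hT.exists_vert_degree_one_of_nontrivial
  obtain ⟨T', par, φ, hpm, hφr⟩ := hT.exists_isParentMap r
  have hdeg : T'.degree 0 = 1 := by
    rw [← show φ r = 0 from Fin.ext hφr, φ.degree_eq]; exact hr
  obtain ⟨z, hz0, hzm, hz⟩ := hpm.exists_two_le_childCount hdeg fun h => hiso ⟨h ▸ φ⟩
  have hf : ForcesStrict n par m (fun _ => centralInd n 0) 0 :=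
    ⟨z, hzm, .inr ⟨hz0, .inr (by simpa using hz)⟩⟩
  have hpos (i : ℕ) (_ : i ≤ m) : 0 < centralInd n 0 0 := by
    rw [centralInd_zero_apply (by omega)]; exact one_pos
  rw [homCount_congr φ _, hpm.homCount_eq_centralSum, homCount_pathGraph]
  simpa using centralSum_zero_pathVec_lt_rootVec hn (fun i hi him => hpm.lt i hi (by omega))
    (dominatesPathVec_centralInd_zero m) hpos hf

end LoopedPath

theorem looped_path_hoffman_london_general (n : ℕ) :
    (∀ t : ℕ, 1 ≤ t → ∀ T : SimpleGraph (Fin t), T.IsTree →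
      homCount (SimpleGraph.pathGraph t) (loopedPathAdj n) ≤
        homCount T (loopedPathAdj n)) ∧
    (3 ≤ n → ∀ t : ℕ, 1 ≤ t → ∀ T : SimpleGraph (Fin t), T.IsTree →
      ¬ Nonempty (T ≃g SimpleGraph.pathGraph t) →
      homCount (SimpleGraph.pathGraph t) (loopedPathAdj n) <
        homCount T (loopedPathAdj n)) :=
  ⟨fun _ _ _ hT => LoopedPath.homCount_pathGraph_le_of_isTree hT,
    fun hn _ _ _ hT hiso => LoopedPath.homCount_pathGraph_lt_of_isTree hn hT hiso⟩

/-- **Theorem.** For every `n ≥ 1`, the fully looped path `P_n^∘` is Hoffman-London, and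
for every `n ≥ 3` it is strongly Hoffman-London. -/
theorem looped_path_hoffman_london (n : ℕ) (hn : 1 ≤ n) :
    (∀ t : ℕ, 1 ≤ t → ∀ T : SimpleGraph (Fin t), T.IsTree →
      homCount (SimpleGraph.pathGraph t) (loopedPathAdj n) ≤
        homCount T (loopedPathAdj n)) ∧
    (3 ≤ n → ∀ t : ℕ, 1 ≤ t → ∀ T : SimpleGraph (Fin t), T.IsTree →
      ¬ Nonempty (T ≃g SimpleGraph.pathGraph t) →
      homCount (SimpleGraph.pathGraph t) (loopedPathAdj n) <
        homCount T (loopedPathAdj n)) :=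
  looped_path_hoffman_london_general n
end
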